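/- arXiv:1403.6223 — 8 statements merged into one kernel-verified Lean document; each statement's English description precedes it below -/
import Mathlib

section
/- Let M and N be almost-moon polyominoes such that N is obtained from M by interchanging two adjacent rows R_s (shorter) and R_l (longer), with no exceptional rows other than the swapped ones. Define f : F(M) → F(N) by keeping all other rows fixed, placing the filling β (the part of R_l with the same column support as R_s) into the short row of N, and placing the concatenation γ, α, δ (where α is the filling of R_s and γ, δ are the fillings of the two overhangs of R_l) into the long row of N. Then f is an involution in the sense that f_{N,M} ∘ f_{M,N} is the identity on F(M). -/
open Set
open scoped Classical

def Row (P : Set (ℤ × ℤ)) (y : ℤ) : Set ℤ := {x | (x, y) ∈ P}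

def Col (P : Set (ℤ × ℤ)) (x : ℤ) : Set ℤ := {y | (x, y) ∈ P}

def RowConvex (P : Set (ℤ × ℤ)) : Prop :=
  ∀ y x₁ x₂ x, x₁ ∈ Row P y → x₂ ∈ Row P y → x₁ ≤ x → x ≤ x₂ → x ∈ Row P y

def ColConvex (P : Set (ℤ × ℤ)) : Prop :=
  ∀ x y₁ y₂ y, y₁ ∈ Col P x → y₂ ∈ Col P x → y₁ ≤ y → y ≤ y₂ → y ∈ Col P x

def RowsComparable (P : Set (ℤ × ℤ)) : Prop :=
  ∀ y₁ y₂, Row P y₁ ⊆ Row P y₂ ∨ Row P y₂ ⊆ Row P y₁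

def ColsComparable (P : Set (ℤ × ℤ)) : Prop :=
  ∀ x₁ x₂, Col P x₁ ⊆ Col P x₂ ∨ Col P x₂ ⊆ Col P x₁

/-- The length of the row of `P` at height `y` (also: the row sum of a filling). -/
noncomputable def rowLen (P : Set (ℤ × ℤ)) (y : ℤ) : ℕ := (Row P y).ncard

/-- The length of the column of `P` at abscissa `x` (also: the column sum of a filling). -/
noncomputable def colLen (P : Set (ℤ × ℤ)) (x : ℤ) : ℕ := (Col P x).ncard

/-- A row is exceptional if some row strictly above it and some row strictly below it
are strictly longer. -/
def ExceptionalRow (P : Set (ℤ × ℤ)) (y : ℤ) : Prop :=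
  (∃ y' > y, rowLen P y < rowLen P y') ∧ (∃ y' < y, rowLen P y < rowLen P y')

/-- A moon polyomino: finite, row- and column-convex, intersection-free
(any two columns comparable). -/
def MoonPolyomino (P : Set (ℤ × ℤ)) : Prop :=
  P.Finite ∧ RowConvex P ∧ ColConvex P ∧ ColsComparable P

/-- An almost-moon polyomino: finite, rows are intervals, pairwise comparable rows,
and at most one exceptional row. -/
def AlmostMoon (P : Set (ℤ × ℤ)) : Prop :=
  P.Finite ∧ RowConvex P ∧ RowsComparable P ∧
    ∀ y₁ y₂, ExceptionalRow P y₁ → ExceptionalRow P y₂ → y₁ = y₂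

/-- `g` is a northeast chain of size `k` of the filling `F` in the polyomino `P`. -/
def IsNEChain (P F : Set (ℤ × ℤ)) (k : ℕ) (g : Fin k → ℤ × ℤ) : Prop :=
  (∀ r, g r ∈ F) ∧ StrictMono (fun r => (g r).1) ∧ StrictMono (fun r => (g r).2) ∧
    ∀ r s, ((g r).1, (g s).2) ∈ P

/-- The size of the largest northeast chain of the filling `F` in the polyomino `P`. -/
noncomputable def neSize (P F : Set (ℤ × ℤ)) : ℕ :=
  sSup {k | ∃ g : Fin k → ℤ × ℤ, IsNEChain P F k g}

/-- Interchange the rows at heights `y₁` and `y₂`. -/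
def rswap (y₁ y₂ : ℤ) (c : ℤ × ℤ) : ℤ × ℤ :=
  (c.1, if c.2 = y₁ then y₂ else if c.2 = y₂ then y₁ else c.2)

/-- The row-swap map on fillings: cells in columns of `S` (the support of the short row)
stay put, while the overhang cells of the long row are moved between heights `y₁`, `y₂`. -/
noncomputable def fswap (S : Set ℤ) (y₁ y₂ : ℤ) (F : Set (ℤ × ℤ)) : Set (ℤ × ℤ) :=
  (fun c => if c.1 ∈ S then c else rswap y₁ y₂ c) '' F

/-- The row-swap map `f_{M,N}` on fillings is an involution: applying it twice
(`f_{N,M} ∘ f_{M,N}`, which is given by the same formula) is the identity on `F(M)`. -/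
theorem fswap_involution (M N : Set (ℤ × ℤ)) (ys yl : ℤ)
    (hM : AlmostMoon M) (hN : AlmostMoon N)
    (hadj : yl = ys + 1 ∨ ys = yl + 1)
    (hsub : Row M ys ⊆ Row M yl) (hlt : rowLen M ys < rowLen M yl)
    (hNdef : N = rswap ys yl '' M)
    (hexM : ∀ y, ExceptionalRow M y → y = ys ∨ y = yl)
    (hexN : ∀ y, ExceptionalRow N y → y = ys ∨ y = yl) :
    ∀ F : Set (ℤ × ℤ), F ⊆ M →
      fswap (Row M ys) ys yl (fswap (Row M ys) ys yl F) = F := by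
  intro F _
  unfold fswap
  rw [Set.image_image]
  have key : ∀ c : ℤ × ℤ,
      (fun c => if c.1 ∈ Row M ys then c else rswap ys yl c)
        ((fun c => if c.1 ∈ Row M ys then c else rswap ys yl c) c) = c := by
    intro c
    by_cases h : c.1 ∈ Row M ys
    · simp [h]
    · simp only [h, if_false]
      have h1 : (rswap ys yl c).1 = c.1 := rfl
      rw [h1, if_neg h]
      simp only [rswap]
      split_ifs <;> simp_all [Prod.ext_iff]
  simp only [key]
  exact Set.image_id F
end

section
/- Let M and N be almost-moon polyominoes related by an interchange of two adjacent rows R_s and R_l, with no exceptional rows other than the swapped ones, and let f = f_{M,N} be the row-swap map on fillings (the short row of N receives the middle part β of the long row of M, and the long row of N receives γ followed by the short row's filling α followed by δ). Then for every 01-filling F of M, |ne(F) − ne(f(F))| ≤ 1, where ne denotes the size of the largest northeast chain. -/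
open Set
open scoped Classical

private lemma chain_bdd (P G : Set (ℤ × ℤ)) (hG : G.Finite) :
    BddAbove {k | ∃ g : Fin k → ℤ × ℤ, IsNEChain P G k g} := by
  refine ⟨G.ncard, ?_⟩
  rintro k ⟨g, hg⟩
  have hinj : Function.Injective g := fun a b h =>
    hg.2.1.injective (congrArg Prod.fst h)
  have hinj2 : Function.Injective (fun r : Fin k => (⟨g r, hg.1 r⟩ : G)) := by
    intro a b h
    exact hinj (congrArg Subtype.val h)
  haveI := hG.to_subtype
  calc k = Nat.card (Fin k) := by simp
    _ ≤ Nat.card G := Nat.card_le_card_of_injective _ hinj2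
    _ = G.ncard := (Nat.card_coe_set_eq G)

private lemma chain_transfer (P Q G G' : Set (ℤ × ℤ)) (y0 : ℤ)
    (hBdd : BddAbove {k | ∃ g : Fin k → ℤ × ℤ, IsNEChain Q G' k g})
    (hG : ∀ c ∈ G, c.2 ≠ y0 → c ∈ G')
    (hP : ∀ a b : ℤ, (a, b) ∈ P → b ≠ y0 → (a, b) ∈ Q) :
    neSize P G ≤ neSize Q G' + 1 := by
  have h0 : (0 : ℕ) ∈ {k | ∃ g : Fin k → ℤ × ℤ, IsNEChain P G k g} :=
    ⟨Fin.elim0, fun r => r.elim0, fun a => a.elim0, fun a => a.elim0, fun r => r.elim0⟩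
  refine csSup_le ⟨0, h0⟩ ?_
  rintro k ⟨g, hmem, hx, hy, hcr⟩
  by_cases hex : ∃ i, (g i).2 = y0
  · obtain ⟨i, hi⟩ := hex
    have hk : k ≠ 0 := by rintro rfl; exact i.elim0
    obtain ⟨n, rfl⟩ : ∃ n, k = n + 1 :=
      ⟨k - 1, (Nat.succ_pred_eq_of_pos (Nat.pos_of_ne_zero hk)).symm⟩
    set g' : Fin n → ℤ × ℤ := fun j => g (i.succAbove j) with hg'
    have hne0 : ∀ j, (g' j).2 ≠ y0 := by
      intro j h
      exact (Fin.succAbove_ne i j) (hy.injective (h.trans hi.symm))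
    have hchain : IsNEChain Q G' n g' := by
      refine ⟨fun j => hG _ (hmem _) (hne0 j), ?_, ?_, ?_⟩
      · exact hx.comp (Fin.strictMono_succAbove i)
      · exact hy.comp (Fin.strictMono_succAbove i)
      · intro r s; exact hP _ _ (hcr _ _) (hne0 s)
    have hle : n ≤ neSize Q G' := le_csSup hBdd ⟨g', hchain⟩
    omega
  · push_neg at hex
    have hchain : IsNEChain Q G' k g :=
      ⟨fun r => hG _ (hmem r) (hex r), hx, hy, fun r s => hP _ _ (hcr r s) (hex s)⟩
    have hle : k ≤ neSize Q G' := le_csSup hBdd ⟨g, hchain⟩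
    omega

/-- Swapping two adjacent rows changes the size of the largest northeast chain
by at most one. -/
theorem fswap_ne_close (M N : Set (ℤ × ℤ)) (ys yl : ℤ)
    (hM : AlmostMoon M) (hN : AlmostMoon N)
    (hadj : yl = ys + 1 ∨ ys = yl + 1)
    (hsub : Row M ys ⊆ Row M yl) (hlt : rowLen M ys < rowLen M yl)
    (hNdef : N = rswap ys yl '' M)
    (hexM : ∀ y, ExceptionalRow M y → y = ys ∨ y = yl)
    (hexN : ∀ y, ExceptionalRow N y → y = ys ∨ y = yl) :
    ∀ F : Set (ℤ × ℤ), F ⊆ M →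
      neSize M F ≤ neSize N (fswap (Row M ys) ys yl F) + 1 ∧
      neSize N (fswap (Row M ys) ys yl F) ≤ neSize M F + 1 := by
  intro F hF
  have hne : ys ≠ yl := by
    intro h; rw [h] at hlt; exact lt_irrefl _ hlt
  have hrs : ∀ c : ℤ × ℤ, rswap ys yl c = (c.1, Equiv.swap ys yl c.2) := by
    intro c; simp [rswap, Equiv.swap_apply_def]
  have memN : ∀ c : ℤ × ℤ, c ∈ N ↔ (c.1, Equiv.swap ys yl c.2) ∈ M := by
    intro c
    rw [hNdef]
    constructor
    · rintro ⟨d, hd, rfl⟩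
      rw [hrs]
      simpa using hd
    · intro h
      exact ⟨(c.1, Equiv.swap ys yl c.2), h, by rw [hrs]; simp⟩
  have hrowys : ∀ a : ℤ, a ∈ Row M ys ↔ (a, ys) ∈ M := fun a => Iff.rfl
  have hrowyl : ∀ a : ℤ, a ∈ Row M yl ↔ (a, yl) ∈ M := fun a => Iff.rfl
  -- forward transfer hypotheses
  have hGf : ∀ c ∈ F, c.2 ≠ yl → c ∈ fswap (Row M ys) ys yl F := by
    intro c hc hcy
    refine ⟨c, hc, ?_⟩
    by_cases h : c.1 ∈ Row M ys
    · simp [h]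
    · have hys : c.2 ≠ ys := by
        intro h2
        apply h
        rw [hrowys]
        rw [← h2]
        exact hF hc
      simp [h, hrs, Equiv.swap_apply_of_ne_of_ne hys hcy]
  have hPf : ∀ a b : ℤ, (a, b) ∈ M → b ≠ yl → (a, b) ∈ N := by
    intro a b hab hb
    rw [memN]
    by_cases h : b = ys
    · subst h
      simp only [Equiv.swap_apply_left]
      exact hsub hab
    · simpa [Equiv.swap_apply_of_ne_of_ne h hb] using hab
  -- backward transfer hypotheses
  have hGb : ∀ c ∈ fswap (Row M ys) ys yl F, c.2 ≠ ys → c ∈ F := by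
    rintro c ⟨d, hd, rfl⟩ hcy
    by_cases h : d.1 ∈ Row M ys
    · simpa [h] using hd
    · have hys : d.2 ≠ ys := by
        intro h2
        apply h
        rw [hrowys, ← h2]
        exact hF hd
      by_cases h2 : d.2 = yl
      · exfalso
        apply hcy
        simp [h, hrs, h2]
      · simpa [h, hrs, Equiv.swap_apply_of_ne_of_ne hys h2] using hd
  have hPb : ∀ a b : ℤ, (a, b) ∈ N → b ≠ ys → (a, b) ∈ M := by
    intro a b hab hb
    rw [memN] at hab
    by_cases h : b = yl
    · subst h
      rw [Equiv.swap_apply_right] at hab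
      exact hsub hab
    · rwa [Equiv.swap_apply_of_ne_of_ne hb h] at hab
  -- the image filling is inside N
  have fsub : fswap (Row M ys) ys yl F ⊆ N := by
    rintro c ⟨d, hd, rfl⟩
    by_cases h : d.1 ∈ Row M ys
    · simp only [h, if_true]
      rw [memN]
      rcases eq_or_ne d.2 ys with h1 | h1
      · rw [h1, Equiv.swap_apply_left]
        exact hsub h
      · rcases eq_or_ne d.2 yl with h2 | h2
        · rw [h2, Equiv.swap_apply_right]
          exact h
        · rw [Equiv.swap_apply_of_ne_of_ne h1 h2]
          exact hF hd
    · simp only [h, if_false]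
      rw [memN, hrs]
      simpa using hF hd
  constructor
  · exact chain_transfer M N F _ yl
      (chain_bdd N _ (hN.1.subset fsub)) hGf hPf
  · exact chain_transfer N M _ F ys
      (chain_bdd M F (hM.1.subset hF)) hGb hPb
end

section
/- With M, N, and f as in the row-swap setting, suppose F ∈ F(M) satisfies ne(f(F)) = ne(F) + 1 = k+1. If a cell a in the long row R_l of f(F) is a problem cell (i.e., a 1-cell of f(F) that belongs to some (k+1)-northeast-chain of f(F)), then the cell b in the short row R_s of f(F) lying in the same column as a is a 0-cell. -/
open Set
open scoped Classical

section RowSwapAux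

variable {M F N : Set (ℤ × ℤ)} {ys yl : ℤ}

lemma rswap_invol (h : ys ≠ yl) (c : ℤ × ℤ) : rswap ys yl (rswap ys yl c) = c := by
  obtain ⟨x, y⟩ := c
  simp only [rswap]
  split_ifs <;> simp_all

lemma mem_rswap_image (h : ys ≠ yl) (c : ℤ × ℤ) :
    c ∈ rswap ys yl '' M ↔ rswap ys yl c ∈ M := by
  constructor
  · rintro ⟨d, hd, rfl⟩; rwa [rswap_invol h]
  · intro hc; exact ⟨_, hc, rswap_invol h _⟩

lemma memN_ys (h : ys ≠ yl) (hNdef : N = rswap ys yl '' M) (x : ℤ) :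
    (x, ys) ∈ N ↔ (x, yl) ∈ M := by
  subst hNdef; rw [mem_rswap_image h]; simp [rswap]

lemma memN_yl (h : ys ≠ yl) (hNdef : N = rswap ys yl '' M) (x : ℤ) :
    (x, yl) ∈ N ↔ (x, ys) ∈ M := by
  subst hNdef; rw [mem_rswap_image h]; simp [rswap, h.symm]

lemma memN_other (h : ys ≠ yl) (hNdef : N = rswap ys yl '' M) {x y : ℤ}
    (h1 : y ≠ ys) (h2 : y ≠ yl) : ((x, y) ∈ N ↔ (x, y) ∈ M) := by
  subst hNdef; rw [mem_rswap_image h]; simp [rswap, h1, h2]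

lemma mem_fswap_iff (h : ys ≠ yl) {S : Set ℤ} (d : ℤ × ℤ) :
    d ∈ fswap S ys yl F ↔ (d.1 ∈ S ∧ d ∈ F) ∨ (d.1 ∉ S ∧ rswap ys yl d ∈ F) := by
  constructor
  · rintro ⟨c, hc, rfl⟩
    dsimp only
    by_cases hcs : c.1 ∈ S
    · exact Or.inl ⟨by simpa [hcs], by simpa [hcs]⟩
    · rw [if_neg hcs]
      exact Or.inr ⟨hcs, by rwa [rswap_invol h]⟩
  · rintro (⟨h1, h2⟩ | ⟨h1, h2⟩)
    · exact ⟨d, h2, by simp [h1]⟩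
    · refine ⟨rswap ys yl d, h2, ?_⟩
      dsimp only
      have h3 : (rswap ys yl d).1 = d.1 := rfl
      rw [h3, if_neg h1]
      exact rswap_invol h d

lemma chain_le_ncard (hMfin : M.Finite) (hF : F ⊆ M) {k : ℕ} {g : Fin k → ℤ × ℤ}
    (hg : IsNEChain M F k g) : k ≤ M.ncard := by
  obtain ⟨hgF, hgx, -, -⟩ := hg
  have hinj : Function.Injective g := fun s t hst =>
    hgx.injective (congrArg Prod.fst hst)
  have hsub : Set.range g ⊆ M := by rintro _ ⟨t, rfl⟩; exact hF (hgF t)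
  calc k = Nat.card (Fin k) := by simp
    _ = Nat.card (Set.range g) := (Nat.card_range_of_injective hinj).symm
    _ = (Set.range g).ncard := Nat.card_coe_set_eq _
    _ ≤ M.ncard := Set.ncard_le_ncard hsub hMfin

lemma chain_le_neSize (hMfin : M.Finite) (hF : F ⊆ M) {k : ℕ} {g : Fin k → ℤ × ℤ}
    (hg : IsNEChain M F k g) : k ≤ neSize M F := by
  apply le_csSup
  · exact ⟨M.ncard, fun n hn => by
      obtain ⟨g'', hg''⟩ := hn; exact chain_le_ncard hMfin hF hg''⟩
  · exact ⟨g, hg⟩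

end RowSwapAux

/-- If `ne(f(F)) = ne(F) + 1 = k + 1` and `a` is a problem cell (a 1-cell of the long row
of `f(F)` lying on some `(k+1)`-chain) then the cell of the short row of `N` in the same
column is a 0-cell of `f(F)`. (The long row of `N` is at height `ys`, the short one at `yl`.) -/
theorem problem_cell_below_empty (M N : Set (ℤ × ℤ)) (ys yl : ℤ)
    (hM : AlmostMoon M) (hN : AlmostMoon N)
    (hadj : yl = ys + 1 ∨ ys = yl + 1)
    (hsub : Row M ys ⊆ Row M yl) (hlt : rowLen M ys < rowLen M yl)
    (hNdef : N = rswap ys yl '' M)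
    (hexM : ∀ y, ExceptionalRow M y → y = ys ∨ y = yl)
    (hexN : ∀ y, ExceptionalRow N y → y = ys ∨ y = yl)
    (F : Set (ℤ × ℤ)) (hF : F ⊆ M) (k : ℕ)
    (hk : neSize M F = k)
    (hk1 : neSize N (fswap (Row M ys) ys yl F) = k + 1)
    (a : ℤ × ℤ) (haF : a ∈ fswap (Row M ys) ys yl F) (hrow : a.2 = ys)
    (hprob : ∃ g : Fin (k + 1) → ℤ × ℤ,
      IsNEChain N (fswap (Row M ys) ys yl F) (k + 1) g ∧ ∃ r, g r = a) :
    (a.1, yl) ∉ fswap (Row M ys) ys yl F := by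
  intro hb
  have hne : ys ≠ yl := by rcases hadj with h | h <;> omega
  -- basic facts about membership in fswap
  have at_yl : ∀ d : ℤ × ℤ, d ∈ fswap (Row M ys) ys yl F → d.2 = yl →
      d ∈ F ∧ d.1 ∈ Row M ys := by
    intro d hx hd2
    rcases (mem_fswap_iff hne _).1 hx with ⟨h1, h2⟩ | ⟨h1, h2⟩
    · exact ⟨h2, h1⟩
    · exfalso
      have hsw : rswap ys yl d = (d.1, ys) := by simp [rswap, hd2, hne.symm]
      rw [hsw] at h2
      exact h1 (hF h2)
  have at_ys : ∀ d : ℤ × ℤ, d ∈ fswap (Row M ys) ys yl F → d.2 = ys →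
      d.1 ∈ Row M ys → d ∈ F := by
    intro d hx _ hd1
    rcases (mem_fswap_iff hne _).1 hx with ⟨_, h2⟩ | ⟨h1, _⟩
    · exact h2
    · exact absurd hd1 h1
  have at_other : ∀ d : ℤ × ℤ, d ∈ fswap (Row M ys) ys yl F → d.2 ≠ ys → d.2 ≠ yl →
      d ∈ F := by
    intro d hx h1 h2
    rcases (mem_fswap_iff hne _).1 hx with ⟨_, h3⟩ | ⟨_, h3⟩
    · exact h3
    · have hsw : rswap ys yl d = d := by simp [rswap, h1, h2]
      rwa [hsw] at h3
  obtain ⟨hbF, hxS⟩ := at_yl (a.1, yl) hb rfl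
  obtain ⟨g, ⟨hgF, hgx, hgy, hgN⟩, r, hgr⟩ := hprob
  have gr2 : (g r).2 = ys := by rw [hgr, hrow]
  have gr1 : (g r).1 = a.1 := by rw [hgr]
  have hneys : ∀ t, t ≠ r → (g t).2 ≠ ys := by
    intro t ht hts
    apply ht
    apply hgy.injective
    show (g t).2 = (g r).2
    rw [hts, gr2]
  by_cases hyl : ∃ t, (g t).2 = yl
  · -- the chain has a cell in row yl; then it is already a chain of F in M
    obtain ⟨t0, ht0⟩ := hyl
    have keyS : ∀ s, (g s).1 ∈ Row M ys := by
      intro s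
      have h1 : ((g s).1, (g t0).2) ∈ N := hgN s t0
      rw [ht0] at h1
      exact (memN_yl hne hNdef _).1 h1
    have hchain : IsNEChain M F (k + 1) g := by
      refine ⟨?_, hgx, hgy, ?_⟩
      · intro s
        by_cases h1 : (g s).2 = ys
        · exact at_ys _ (hgF s) h1 (keyS s)
        · by_cases h2 : (g s).2 = yl
          · exact (at_yl _ (hgF s) h2).1
          · exact at_other _ (hgF s) h1 h2
      · intro s t
        by_cases h1 : (g t).2 = ys
        · rw [h1]; exact keyS s
        · by_cases h2 : (g t).2 = yl
          · rw [h2]; exact hsub (keyS s)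
          · exact (memN_other hne hNdef h1 h2).1 (hgN s t)
    have := chain_le_neSize hM.1 hF hchain
    omega
  · -- no cell of the chain in row yl: replace a by (a.1, yl)
    push_neg at hyl
    classical
    let h' : Fin (k + 1) → ℤ × ℤ := fun t => if t = r then (a.1, yl) else g t
    have hx1 : ∀ t, (h' t).1 = (g t).1 := by
      intro t
      by_cases ht : t = r
      · subst ht; simp [h', gr1]
      · simp [h', ht]
    have h2r : (h' r).2 = yl := by simp [h']
    have h2t : ∀ t, t ≠ r → (h' t).2 = (g t).2 := by intro t ht; simp [h', ht]
    have hchain : IsNEChain M F (k + 1) h' := by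
      refine ⟨?_, ?_, ?_, ?_⟩
      · intro t
        by_cases ht : t = r
        · subst ht; simpa [h'] using hbF
        · have := at_other _ (hgF t) (hneys t ht) (hyl t)
          simpa [h', ht] using this
      · have heq : (fun t => (h' t).1) = fun t => (g t).1 := funext hx1
        rw [heq]; exact hgx
      · intro s t hst
        show (h' s).2 < (h' t).2
        rcases eq_or_ne s r with hsr | hs
        · have htr : t ≠ r := by
            intro hh
            rw [hsr, hh] at hst
            exact absurd hst (lt_irrefl _)
          rw [hsr, h2r, h2t t htr]
          have h5 : ys < (g t).2 := by
            rw [← gr2, ← hsr]; exact hgy hst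
          have h6 := hyl t
          rcases hadj with hh | hh <;> omega
        · rcases eq_or_ne t r with htr | ht
          · rw [htr, h2r, h2t s hs]
            have h5 : (g s).2 < ys := by
              rw [← gr2, ← htr]; exact hgy hst
            have h6 := hyl s
            rcases hadj with hh | hh <;> omega
          · rw [h2t s hs, h2t t ht]; exact hgy hst
      · intro s t
        rw [hx1 s]
        by_cases ht : t = r
        · rw [ht, h2r]
          have h1 : ((g s).1, ys) ∈ N := by rw [← gr2]; exact hgN s r
          exact (memN_ys hne hNdef _).1 h1
        · rw [h2t t ht]
          exact (memN_other hne hNdef (hneys t ht) (hyl t)).1 (hgN s t)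
    have := chain_le_neSize hM.1 hF hchain
    omega
end

section
/- With M, N, f as in the row-swap setting and F ∈ F(M) with ne(F) = k and ne(f(F)) = k+1, define N'' from N' = f(F) by replacing all problem cells in the long row R_l (the 1-cells of N' lying in a (k+1)-chain) by 0's and setting the cells of the short row R_s directly adjacent to them (same column) to 1's. Then every (k+1)-northeast-chain in N'' contains exactly one 1-cell from R_s and one from R_l; in particular every such chain is contained in the vertical strip S of columns meeting R_s. -/
open Set
open scoped Classical

lemma chain_size_le_ncard {P F : Set (ℤ × ℤ)} (hP : P.Finite) (hF : F ⊆ P)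
    {j : ℕ} {g : Fin j → ℤ × ℤ} (hg : IsNEChain P F j g) : j ≤ P.ncard := by
  have hinj : Function.Injective g := by
    intro r s h
    exact hg.2.2.1.injective (congrArg Prod.snd h)
  have hsubr : Set.range g ⊆ P := by
    rintro _ ⟨r, rfl⟩; exact hF (hg.1 r)
  have h1 := Set.ncard_le_ncard hsubr hP
  rwa [← Set.image_univ, Set.ncard_image_of_injective _ hinj, Set.ncard_univ,
    Nat.card_eq_fintype_card, Fintype.card_fin] at h1

lemma no_big_chain {P F : Set (ℤ × ℤ)} (hP : P.Finite) (hF : F ⊆ P) {k : ℕ}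
    (hk : neSize P F = k) : ¬ ∃ g : Fin (k + 1) → ℤ × ℤ, IsNEChain P F (k + 1) g := by
  rintro ⟨g, hg⟩
  have hb : BddAbove {j | ∃ g : Fin j → ℤ × ℤ, IsNEChain P F j g} := by
    refine ⟨P.ncard, ?_⟩
    rintro j ⟨g', hg'⟩
    exact chain_size_le_ncard hP hF hg'
  have hle : k + 1 ≤ sSup {j | ∃ g : Fin j → ℤ × ℤ, IsNEChain P F j g} :=
    le_csSup hb ⟨g, hg⟩
  rw [neSize] at hk
  omega

/-- After shifting all problem cells of `N' = f(F)` from the long row (at height `ys`)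
down to the short row (at height `yl`), every `(k+1)`-northeast-chain of the resulting
filling `N''` contains exactly one 1-cell of the short row and exactly one of the long
row; in particular it is contained in the strip of columns meeting the short row. -/
theorem chains_of_shifted_filling (M N : Set (ℤ × ℤ)) (ys yl : ℤ)
    (hM : AlmostMoon M) (hN : AlmostMoon N)
    (hadj : ys = yl + 1)
    (hsub : Row M ys ⊆ Row M yl) (hlt : rowLen M ys < rowLen M yl)
    (hNdef : N = rswap ys yl '' M)
    (hexM : ∀ y, ExceptionalRow M y → y = ys ∨ y = yl)
    (hexN : ∀ y, ExceptionalRow N y → y = ys ∨ y = yl)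
    (F : Set (ℤ × ℤ)) (hF : F ⊆ M) (k : ℕ)
    (hk : neSize M F = k)
    (N' A0 N'' : Set (ℤ × ℤ))
    (hN' : N' = fswap (Row M ys) ys yl F)
    (hk1 : neSize N N' = k + 1)
    (hA0 : A0 = {a | a ∈ N' ∧ a.2 = ys ∧
      ∃ g : Fin (k + 1) → ℤ × ℤ, IsNEChain N N' (k + 1) g ∧ ∃ r, g r = a})
    (hN'' : N'' = (N' \ A0) ∪ ((fun a : ℤ × ℤ => (a.1, yl)) '' A0)) :
    ∀ g : Fin (k + 1) → ℤ × ℤ, IsNEChain N N'' (k + 1) g →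
      (∃! r, (g r).2 = yl) ∧ (∃! r, (g r).2 = ys) ∧ ∀ r, (g r).1 ∈ Row M ys := by
  intro g hg
  obtain ⟨hmem, hx, hy, hrect⟩ := hg
  have hnoA : ¬ ∃ g' : Fin (k + 1) → ℤ × ℤ, IsNEChain M F (k + 1) g' :=
    no_big_chain hM.1 hF hk
  -- Row `yl` of `N` is exactly `Row M ys`
  have memN_yl : ∀ x : ℤ, (x, yl) ∈ N ↔ x ∈ Row M ys := by
    intro x
    rw [hNdef]
    constructor
    · rintro ⟨⟨a, b⟩, hab, heq⟩
      simp only [rswap, Prod.mk.injEq] at heq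
      obtain ⟨rfl, h2⟩ := heq
      split_ifs at h2 with h h'
      · rw [h] at hab; exact hab
      · omega
      · exact absurd h2 h'
    · intro hx'
      exact ⟨(x, ys), hx', by simp [rswap]⟩
  have memN_ys : ∀ x : ℤ, x ∈ Row M ys → (x, ys) ∈ N := by
    intro x hx'
    rw [hNdef]
    refine ⟨(x, yl), hsub hx', ?_⟩
    have hne : ¬ (yl = ys) := by omega
    simp [rswap, hne]
  have memN_other : ∀ x y : ℤ, y ≠ ys → y ≠ yl → ((x, y) ∈ N ↔ (x, y) ∈ M) := by
    intro x y h1 h2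
    rw [hNdef]
    constructor
    · rintro ⟨⟨a, b⟩, hab, heq⟩
      simp only [rswap, Prod.mk.injEq] at heq
      obtain ⟨rfl, h3⟩ := heq
      split_ifs at h3 with h h'
      · omega
      · omega
      · rw [h3] at hab; exact hab
    · intro hxy
      refine ⟨(x, y), hxy, ?_⟩
      simp only [rswap]
      rw [if_neg h1, if_neg h2]
  have memN_yl_M : ∀ x : ℤ, (x, yl) ∈ N → (x, yl) ∈ M := fun x h =>
    hsub ((memN_yl x).1 h)
  -- cells of N'
  have memN'_elim : ∀ c ∈ N', ∃ d, d ∈ F ∧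
      (if d.1 ∈ Row M ys then d else rswap ys yl d) = c := by
    intro c hc
    rw [hN'] at hc
    exact hc
  have memN'_F : ∀ c ∈ N', c.2 ≠ ys → c ∈ F := by
    rintro ⟨cx, cy⟩ hc hcy
    obtain ⟨⟨dx, dy⟩, hd, heq⟩ := memN'_elim _ hc
    by_cases hdx : dx ∈ Row M ys
    · rw [if_pos hdx] at heq
      exact heq ▸ hd
    · rw [if_neg hdx] at heq
      simp only [rswap, Prod.mk.injEq] at heq
      obtain ⟨rfl, h2⟩ := heq
      split_ifs at h2 with h h'
      · rw [h] at hd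
        exact absurd (hF hd) hdx
      · exact absurd h2.symm hcy
      · rw [h2] at hd; exact hd
  have memN'_F_ys : ∀ c ∈ N', c.2 = ys → c.1 ∈ Row M ys → c ∈ F := by
    rintro ⟨cx, cy⟩ hc hcy hcx
    obtain ⟨⟨dx, dy⟩, hd, heq⟩ := memN'_elim _ hc
    by_cases hdx : dx ∈ Row M ys
    · rw [if_pos hdx] at heq
      exact heq ▸ hd
    · exfalso
      rw [if_neg hdx] at heq
      simp only [rswap, Prod.mk.injEq] at heq
      rw [heq.1] at hdx
      exact hdx hcx
  -- every (k+1)-chain of (N, N') has a cell at height ys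
  have lemmaB : ∀ g' : Fin (k + 1) → ℤ × ℤ, IsNEChain N N' (k + 1) g' →
      ∃ r, (g' r).2 = ys := by
    intro g' hg'
    by_contra hno
    push_neg at hno
    refine hnoA ⟨g', fun r => memN'_F _ (hg'.1 r) (hno r), hg'.2.1, hg'.2.2.1, ?_⟩
    intro r s
    have h := hg'.2.2.2 r s
    rcases eq_or_ne (g' s).2 yl with h2 | h2
    · rw [h2] at h ⊢
      exact memN_yl_M _ h
    · exact (memN_other _ _ (hno s) h2).1 h
  have hyinj : ∀ r s : Fin (k + 1), (g r).2 = (g s).2 → r = s := by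
    intro r s h
    exact hy.injective h
  -- Step 1: the chain has a moved cell at height yl
  have step1 : ∃ r0, (g r0).2 = yl ∧ ((g r0).1, ys) ∈ A0 := by
    by_contra h1
    push_neg at h1
    have hmem' : ∀ r, g r ∈ N' \ A0 := by
      intro r
      have hr := hmem r
      rw [hN'', Set.mem_union] at hr
      rcases hr with h | h
      · exact h
      · exfalso
        obtain ⟨a, ha, heq⟩ := h
        have heq' : (a.1, yl) = g r := heq
        have ha2 : a.2 = ys := by
          rw [hA0] at ha; exact ha.2.1
        have h2 : (g r).2 = yl := by rw [← heq']
        have h3 : ((g r).1, ys) = a := by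
          rw [← heq', ← ha2]
        rw [← h3] at ha
        exact h1 r h2 ha
    have hchain' : IsNEChain N N' (k + 1) g := ⟨fun r => (hmem' r).1, hx, hy, hrect⟩
    obtain ⟨r, hr⟩ := lemmaB g hchain'
    have hgA : g r ∈ A0 := by
      rw [hA0]
      exact ⟨(hmem' r).1, hr, g, hchain', r, rfl⟩
    exact (hmem' r).2 hgA
  obtain ⟨r0, hr0, hr0A⟩ := step1
  -- Step 3: all columns of the chain lie in Row M ys
  have step3 : ∀ r, (g r).1 ∈ Row M ys := by
    intro r
    have h := hrect r r0
    rw [hr0] at h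
    exact (memN_yl _).1 h
  -- Step 4: the chain has a cell at height ys
  have hylys : ∀ s, s ≠ r0 → (g s).2 ≠ yl := by
    intro s hs hcon
    exact hs (hyinj s r0 (by rw [hcon, hr0]))
  have step4 : ∃ r, (g r).2 = ys := by
    by_contra hno
    push_neg at hno
    set G : Fin (k + 1) → ℤ × ℤ := fun r => if r = r0 then ((g r0).1, ys) else g r
      with hG
    have hGfst : ∀ r, (G r).1 = (g r).1 := by
      intro r
      by_cases h : r = r0 <;> simp [hG, h]
    have hGsnd : ∀ r, (G r).2 = if r = r0 then ys else (g r).2 := by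
      intro r
      by_cases h : r = r0 <;> simp [hG, h]
    refine hnoA ⟨G, ?_, ?_, ?_, ?_⟩
    · intro r
      by_cases h : r = r0
      · have hG0 : G r = ((g r0).1, ys) := by simp [hG, h]
        rw [hG0]
        have hmemN' : ((g r0).1, ys) ∈ N' := by
          rw [hA0] at hr0A
          exact hr0A.1
        exact memN'_F_ys _ hmemN' rfl (step3 r0)
      · have hG0 : G r = g r := by simp [hG, h]
        rw [hG0]
        have hgr : g r ∈ N' := by
          have hr := hmem r
          rw [hN'', Set.mem_union] at hr
          rcases hr with h' | h'
          · exact h'.1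
          · exfalso
            obtain ⟨a, ha, heq⟩ := h'
            have heq' : (a.1, yl) = g r := heq
            have h2 : (g r).2 = yl := by rw [← heq']
            exact hylys r h h2
        exact memN'_F _ hgr (hno r)
    · have hfun : (fun r => (G r).1) = fun r => (g r).1 := funext hGfst
      rw [hfun]
      exact hx
    · intro r s hrs
      show (G r).2 < (G s).2
      rw [hGsnd, hGsnd]
      by_cases h : r = r0
      · rw [if_pos h]
        have hs : s ≠ r0 := by
          intro hs'
          rw [hs'] at hrs
          rw [h] at hrs
          exact lt_irrefl _ hrs
        rw [if_neg hs]
        have h1 : yl < (g s).2 := by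
          rw [← hr0]
          exact hy (show r0 < s by rw [← h]; exact hrs)
        have h2 := hno s
        have h3 := hylys s hs
        omega
      · rw [if_neg h]
        by_cases h' : s = r0
        · rw [if_pos h']
          have h1 : (g r).2 < yl := by
            rw [← hr0]
            exact hy (show r < r0 by rw [← h']; exact hrs)
          omega
        · rw [if_neg h']
          exact hy hrs
    · intro r s
      show ((G r).1, (G s).2) ∈ M
      rw [hGfst r, hGsnd s]
      by_cases h : s = r0
      · rw [if_pos h]
        exact step3 r
      · rw [if_neg h]
        have hNN := hrect r s
        exact (memN_other _ _ (hno s) (hylys s h)).1 hNN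
  obtain ⟨r1, hr1⟩ := step4
  exact ⟨⟨r0, hr0, fun r hr => hyinj r r0 (by rw [hr, hr0])⟩,
    ⟨r1, hr1, fun r hr => hyinj r r1 (by rw [hr, hr1])⟩, step3⟩
end

section
/- Let M be an almost-moon polyomino with k rows and let σ be a permutation of the rows such that σM (the polyomino obtained by permuting the row shapes of M according to σ) is also an almost-moon polyomino. Then σM can be obtained from M by a finite sequence of interchanges of adjacent rows such that every intermediate polyomino is an almost-moon polyomino with no exceptional rows other than the two rows being swapped at that step. -/
/-!
Only the row-length profile `L : ℤ → ℕ` matters, since comparable rows of equal length coincide.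
Swapping rows `y, y + 1` is admissible as soon as all exceptional rows of `L` lie in
`{y, y + 1}`: the status of the other rows does not change, and the longer of the two swapped
rows cannot become exceptional. Hence a row `s` with no exceptional row besides it can be lifted,
one swap at a time, past the highest longer row above it, ending in a profile without
exceptional rows. Such lifts connect every admissible profile to a profile that vanishes below
some height `c` and decreases weakly from `c` on: first lift the exceptional row, then
repeatedly the bottom row, and finally the empty row below the support, which shifts the profile
down. Since `c` can be taken as small as we like, `M` and `σM` reach sorted profiles with the
same `c`, and these coincide because a sorted profile is determined by `c` and its multiset of
values.
-/

open Set
open scoped Classical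

open Equiv Function Relation

def exceptionalSet (L : ℤ → ℕ) : Set ℤ :=
  {y | (∃ z > y, L y < L z) ∧ (∃ z < y, L y < L z)}

lemma mem_exceptionalSet_comp_iff {L : ℤ → ℕ} {π : Perm ℤ} {z : ℤ}
    (hπ : ∀ u, z < π u ↔ z < u) (hπ' : ∀ u, π u < z ↔ u < z) :
    z ∈ exceptionalSet (L ∘ π) ↔ z ∈ exceptionalSet L := by
  have hz : π z = z := by have := hπ z; have := hπ' z; omega
  simp only [exceptionalSet, mem_ofPred_eq, comp_apply, hz]
  constructor
  · rintro ⟨⟨u, hu, hLu⟩, ⟨v, hv, hLv⟩⟩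
    exact ⟨⟨π u, (hπ u).2 hu, hLu⟩, ⟨π v, (hπ' v).2 hv, hLv⟩⟩
  · rintro ⟨⟨u, hu, hLu⟩, ⟨v, hv, hLv⟩⟩
    exact ⟨⟨π.symm u, (hπ _).1 (by rwa [apply_symm_apply]), by rwa [apply_symm_apply]⟩,
      ⟨π.symm v, (hπ' _).1 (by rwa [apply_symm_apply]), by rwa [apply_symm_apply]⟩⟩

lemma mem_exceptionalSet_comp_swap_iff {L : ℤ → ℕ} {y z : ℤ} (hz : z ≠ y) (hz' : z ≠ y + 1) :
    z ∈ exceptionalSet (L ∘ swap y (y + 1)) ↔ z ∈ exceptionalSet L :=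
  mem_exceptionalSet_comp_iff (fun u => by rw [swap_apply_def]; split_ifs <;> omega)
    (fun u => by rw [swap_apply_def]; split_ifs <;> omega)

lemma mem_exceptionalSet_of_mem_exceptionalSet_comp_swap {L : ℤ → ℕ} {y : ℤ}
    (h₀ : y ∈ exceptionalSet (L ∘ swap y (y + 1)))
    (h₁ : y + 1 ∈ exceptionalSet (L ∘ swap y (y + 1))) :
    y ∈ exceptionalSet L ∧ y + 1 ∈ exceptionalSet L := by
  obtain ⟨⟨u, hu, hLu⟩, ⟨v, hv, hLv⟩⟩ := h₀
  obtain ⟨⟨u', hu', hLu'⟩, ⟨v', hv', hLv'⟩⟩ := h₁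
  simp only [comp_apply, swap_apply_left, swap_apply_right] at hLu hLv hLu' hLv'
  rw [swap_apply_of_ne_of_ne (by omega) (by omega)] at hLv hLu'
  rcases le_total (L y) (L (y + 1)) with hle | hle
  · have hu₁ : u ≠ y + 1 := by rintro rfl; rw [swap_apply_right] at hLu; omega
    rw [swap_apply_of_ne_of_ne (by omega) hu₁] at hLu
    exact ⟨⟨⟨u, hu, by omega⟩, ⟨v, hv, by omega⟩⟩, ⟨⟨u, by omega, hLu⟩, ⟨v, by omega, hLv⟩⟩⟩
  · have hv₀ : v' ≠ y := by rintro rfl; rw [swap_apply_left] at hLv'; omega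
    rw [swap_apply_of_ne_of_ne hv₀ (by omega)] at hLv'
    exact ⟨⟨⟨u', by omega, hLu'⟩, ⟨v', by omega, hLv'⟩⟩, ⟨⟨u', hu', by omega⟩, ⟨v', hv', by omega⟩⟩⟩

lemma exceptionalSet_comp_swap {L : ℤ → ℕ} {y : ℤ} (hL : (exceptionalSet L).Subsingleton)
    (hy : exceptionalSet L ⊆ {y, y + 1}) :
    (exceptionalSet (L ∘ swap y (y + 1))).Subsingleton ∧
      exceptionalSet (L ∘ swap y (y + 1)) ⊆ {y, y + 1} := by
  have hsub : exceptionalSet (L ∘ swap y (y + 1)) ⊆ {y, y + 1} := by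
    intro z hz
    by_contra hzy
    have hzy' : z ≠ y ∧ z ≠ y + 1 := by simpa [not_or] using hzy
    exact hzy (hy ((mem_exceptionalSet_comp_swap_iff hzy'.1 hzy'.2).1 hz))
  refine ⟨fun a ha b hb => ?_, hsub⟩
  by_contra hab
  have hpair : y ∈ exceptionalSet (L ∘ swap y (y + 1)) ∧
      y + 1 ∈ exceptionalSet (L ∘ swap y (y + 1)) := by
    rcases hsub ha with rfl | rfl <;> rcases hsub hb with rfl | rfl <;> simp_all
  have := mem_exceptionalSet_of_mem_exceptionalSet_comp_swap hpair.1 hpair.2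
  exact absurd (hL this.1 this.2) (by omega)

def AdmissibleSwap (L L' : ℤ → ℕ) : Prop :=
  ∃ y, L' = L ∘ swap y (y + 1) ∧ (exceptionalSet L).Subsingleton ∧
    (exceptionalSet L').Subsingleton ∧ exceptionalSet L ⊆ {y, y + 1} ∧
      exceptionalSet L' ⊆ {y, y + 1}

lemma admissibleSwap_comp_swap {L : ℤ → ℕ} {y : ℤ} (hL : (exceptionalSet L).Subsingleton)
    (hy : exceptionalSet L ⊆ {y, y + 1}) : AdmissibleSwap L (L ∘ swap y (y + 1)) :=
  ⟨y, rfl, hL, (exceptionalSet_comp_swap hL hy).1, hy, (exceptionalSet_comp_swap hL hy).2⟩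

lemma AdmissibleSwap.symm {L L' : ℤ → ℕ} (h : AdmissibleSwap L L') : AdmissibleSwap L' L := by
  obtain ⟨y, rfl, hL, hL', hy, hy'⟩ := h
  refine ⟨y, ?_, hL', hL, hy', hy⟩
  funext z
  simp [swap_apply_self]

instance : Std.Symm AdmissibleSwap := ⟨fun _ _ => AdmissibleSwap.symm⟩

lemma AdmissibleSwap.exists_perm {L L' : ℤ → ℕ} (h : ReflTransGen AdmissibleSwap L L') :
    ∃ π : Perm ℤ, L' = L ∘ π := by
  induction h with
  | refl => exact ⟨1, rfl⟩
  | tail _ hstep ih =>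
    obtain ⟨π, rfl⟩ := ih
    obtain ⟨y, rfl, -⟩ := hstep
    exact ⟨π * swap y (y + 1), rfl⟩

lemma support_comp_perm_finite {L : ℤ → ℕ} (hfin : (support L).Finite) (π : Perm ℤ) :
    (support (L ∘ π)).Finite := by
  rw [support_comp_eq_preimage]
  exact hfin.preimage π.injective.injOn

lemma exceptionalSet_comp_swap_subset_singleton {L : ℤ → ℕ} {q z : ℤ}
    (hE : exceptionalSet L ⊆ {q}) (hz : q < z) (hlt : L q < L z) :
    exceptionalSet (L ∘ swap q (q + 1)) ⊆ {q + 1} := by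
  have hsub := (exceptionalSet_comp_swap (y := q) (subsingleton_singleton.anti hE)
    (hE.trans (by simp))).2
  intro w hw
  rcases hsub hw with rfl | h
  · exfalso
    obtain ⟨⟨u, hu, hLu⟩, ⟨v, hv, hLv⟩⟩ := hw
    simp only [comp_apply, swap_apply_left] at hLu hLv
    rw [swap_apply_of_ne_of_ne (by omega) (by omega)] at hLv
    -- `w + 1` would be exceptional in `L`: `v` lies below it, and `u` or `z` above it
    have hup : ∃ u' > w + 1, L (w + 1) < L u' := by
      rcases eq_or_ne u (w + 1) with rfl | hu₁
      · rw [swap_apply_right] at hLu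
        have hz₁ : z ≠ w + 1 := by rintro rfl; omega
        exact ⟨z, by omega, by omega⟩
      · rw [swap_apply_of_ne_of_ne (by omega) hu₁] at hLu
        exact ⟨u, by omega, hLu⟩
    have := hE ⟨hup, ⟨v, by omega, hLv⟩⟩
    simp at this
  · exact h

def moveRow (L : ℤ → ℕ) (s h : ℤ) : ℤ → ℕ :=
  fun z => if z = h then L s else if s ≤ z ∧ z < h then L (z + 1) else L z

lemma moveRow_self (L : ℤ → ℕ) (s : ℤ) : moveRow L s s = L := by
  funext z
  simp only [moveRow]
  split_ifs with h <;> first | rw [h] | rfl | omega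

lemma moveRow_add_one (L : ℤ → ℕ) {s q : ℤ} (hsq : s ≤ q) :
    moveRow L s (q + 1) = moveRow L s q ∘ swap q (q + 1) := by
  funext z
  simp only [moveRow, comp_apply, swap_apply_def]
  split_ifs <;> first | rfl | omega | (congr 1; omega)

lemma moveRow_of_lt_left (L : ℤ → ℕ) {s h z : ℤ} (hz : z < s) (hsh : s ≤ h) :
    moveRow L s h z = L z := by
  simp only [moveRow]
  split_ifs <;> first | rfl | omega

lemma moveRow_of_mem_Ico (L : ℤ → ℕ) {s h z : ℤ} (hs : s ≤ z) (hz : z < h) :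
    moveRow L s h z = L (z + 1) := by
  simp only [moveRow]
  split_ifs <;> first | rfl | omega

lemma moveRow_of_lt_right (L : ℤ → ℕ) {s h z : ℤ} (hz : h < z) : moveRow L s h z = L z := by
  simp only [moveRow]
  split_ifs <;> first | rfl | omega

lemma reflTransGen_moveRow {L : ℤ → ℕ} {s h : ℤ} (hE : exceptionalSet L ⊆ {s}) (hsh : s < h)
    (hlt : L s < L h) :
    ReflTransGen AdmissibleSwap L (moveRow L s h) ∧ exceptionalSet (moveRow L s h) ⊆ {h} := by
  suffices ∀ q, s ≤ q → q ≤ h →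
      ReflTransGen AdmissibleSwap L (moveRow L s q) ∧ exceptionalSet (moveRow L s q) ⊆ {q} from
    this h hsh.le le_rfl
  intro q hsq
  induction q, hsq using Int.leInduction with
  | base => exact fun _ => by rw [moveRow_self]; exact ⟨.refl, hE⟩
  | succ q hsq ih =>
    intro hqh
    obtain ⟨hpath, hEq⟩ := ih (by omega)
    have hq : moveRow L s q q = L s := by simp [moveRow]
    rw [moveRow_add_one L hsq]
    refine ⟨hpath.tail (admissibleSwap_comp_swap (subsingleton_singleton.anti hEq)
      (hEq.trans (by simp))), exceptionalSet_comp_swap_subset_singleton hEq (z := h)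
      (by omega) ?_⟩
    rwa [hq, moveRow_of_lt_right L (by omega)]

lemma exists_reflTransGen_moveRow {L : ℤ → ℕ} {s : ℤ} (hfin : (support L).Finite)
    (hE : exceptionalSet L ⊆ {s}) (habove : ∃ z > s, L s < L z) :
    ∃ h > s, (∀ z > h, L z ≤ L s) ∧
      ReflTransGen AdmissibleSwap L (moveRow L s h) ∧ exceptionalSet (moveRow L s h) = ∅ := by
  obtain ⟨h, ⟨hsh, hlt⟩, hmax⟩ := exists_max_image {z | s < z ∧ L s < L z} id
    (hfin.subset fun z hz => by simp only [mem_support]; exact hz.2.ne_bot) habove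
  have habove : ∀ z > h, L z ≤ L s := fun z hz => by
    by_contra hc
    have := hmax z ⟨by omega, by omega⟩
    simp only [id] at this
    omega
  obtain ⟨hpath, hEh⟩ := reflTransGen_moveRow hE hsh hlt
  refine ⟨h, hsh, habove, hpath, eq_empty_of_subset_empty fun z hz => ?_⟩
  obtain rfl := hEh hz
  obtain ⟨⟨u, hu, hLu⟩, -⟩ := hz
  rw [moveRow_of_lt_right L hu] at hLu
  have := habove u hu
  simp [moveRow] at hLu
  omega

lemma exists_reflTransGen_exceptionalSet_eq_empty {L : ℤ → ℕ} (hfin : (support L).Finite)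
    (hL : (exceptionalSet L).Subsingleton) :
    ∃ L', ReflTransGen AdmissibleSwap L L' ∧ exceptionalSet L' = ∅ := by
  rcases hL.eq_empty_or_singleton with hE | ⟨e, hE⟩
  · exact ⟨L, .refl, hE⟩
  · have he : e ∈ exceptionalSet L := hE ▸ rfl
    obtain ⟨h, -, -, hpath, hE'⟩ := exists_reflTransGen_moveRow hfin hE.subset he.1
    exact ⟨_, hpath, hE'⟩

def SortedFrom (c : ℤ) (L : ℤ → ℕ) : Prop :=
  (∀ z < c, L z = 0) ∧ AntitoneOn L (Ici c)

lemma SortedFrom.exceptionalSet_eq_empty {L : ℤ → ℕ} {c : ℤ} (hL : SortedFrom c L) :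
    exceptionalSet L = ∅ := by
  refine eq_empty_of_subset_empty fun y ⟨⟨u, hu, hLu⟩, ⟨v, hv, hLv⟩⟩ => ?_
  by_cases hy : c ≤ y
  · exact absurd (hL.2 (mem_Ici.2 hy) (mem_Ici.2 (by omega)) hu.le) (by omega)
  · rw [hL.1 v (by omega)] at hLv
    omega

lemma SortedFrom.comp_add_one {L : ℤ → ℕ} {c : ℤ} (hL : SortedFrom c L) :
    SortedFrom (c - 1) fun z => L (z + 1) :=
  ⟨fun z hz => hL.1 _ (by omega), fun _ hy _ hy' hyy' =>
    hL.2 (mem_Ici.2 (by simp at hy; omega)) (mem_Ici.2 (by simp at hy'; omega)) (by omega)⟩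

lemma sortedFrom_of_forall_le {L : ℤ → ℕ} {a : ℤ} (hE : exceptionalSet L = ∅)
    (hzero : ∀ z < a, L z = 0) (hmax : ∀ z, L z ≤ L a) : SortedFrom a L := by
  refine ⟨hzero, fun y hy y' hy' hyy' => ?_⟩
  by_contra hlt
  have hay : a < y := lt_of_le_of_ne hy fun h => hlt (h ▸ hmax y')
  have : y ∈ exceptionalSet L :=
    ⟨⟨y', lt_of_le_of_ne hyy' (by rintro rfl; omega), by omega⟩, ⟨a, hay, by
      have := hmax y'; omega⟩⟩
  simp [hE] at this

lemma exists_reflTransGen_sortedFrom {L : ℤ → ℕ} {a : ℤ} (hfin : (support L).Finite)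
    (hE : exceptionalSet L = ∅) (hzero : ∀ z < a, L z = 0) :
    ∃ S, ReflTransGen AdmissibleSwap L S ∧ SortedFrom a S := by
  obtain ⟨p, hp, hmax⟩ := exists_max_image (insert a (support L)) L (hfin.insert a) ⟨a, by simp⟩
  have hap : a ≤ p := by
    rcases hp with rfl | hp
    · rfl
    · exact not_lt.1 fun h => hp (hzero p h)
  replace hmax : ∀ z, L z ≤ L p := fun z => by
    by_cases hz : L z = 0
    · omega
    · exact hmax z (mem_insert_of_mem _ hz)
  clear hp
  induction p, hap using Int.leInduction generalizing L with
  | base => exact ⟨L, .refl, sortedFrom_of_forall_le hE hzero hmax⟩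
  | succ p hap ih =>
    by_cases ha : L (p + 1) ≤ L a
    · exact ⟨L, .refl, sortedFrom_of_forall_le hE hzero fun z => (hmax z).trans ha⟩
    -- lift the bottom row `a` over the rows larger than it; the maximum moves down by one
    obtain ⟨t, hat, habove, hpath, hE'⟩ :=
      exists_reflTransGen_moveRow (s := a) hfin (hE ▸ empty_subset _) ⟨p + 1, by omega, by omega⟩
    have hpt : p + 1 ≤ t := not_lt.1 fun h => absurd (habove _ h) (by omega)
    obtain ⟨π, hπ⟩ := AdmissibleSwap.exists_perm hpath
    obtain ⟨S, hpath', hS⟩ := ih (hπ ▸ support_comp_perm_finite hfin π) hE'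
      (fun z hz => by rw [moveRow_of_lt_left L hz hat.le]; exact hzero z hz)
      (fun z => by rw [moveRow_of_mem_Ico L hap (by omega), hπ]; exact hmax _)
    exact ⟨S, hpath.trans hpath', hS⟩

lemma SortedFrom.reflTransGen_comp_add_one {L : ℤ → ℕ} {c : ℤ} (hL : SortedFrom c L)
    (hfin : (support L).Finite) : ReflTransGen AdmissibleSwap L fun z => L (z + 1) := by
  by_cases h0 : L c = 0
  · have hL0 : ∀ z, L z = 0 := fun z => by
      by_cases hz : z < c
      · exact hL.1 z hz
      · exact Nat.eq_zero_of_le_zero (h0 ▸ hL.2 (mem_Ici.2 le_rfl) (mem_Ici.2 (by omega))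
          (by omega))
    have hshift : (fun z => L (z + 1)) = L := funext fun z => by rw [hL0, hL0]
    rw [hshift]
  have hc₁ : L (c - 1) = 0 := hL.1 _ (by omega)
  obtain ⟨t, hct, habove, hpath, -⟩ := exists_reflTransGen_moveRow (s := c - 1) hfin
    (hL.exceptionalSet_eq_empty ▸ empty_subset _) ⟨c, by omega, by omega⟩
  convert hpath using 1
  funext z
  simp only [moveRow]
  split_ifs with hzt hz
  · subst hzt
    have := habove (z + 1) (by omega)
    omega
  · rfl
  · by_cases hzc : z < c - 1
    · rw [hL.1 z (by omega), hL.1 (z + 1) (by omega)]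
    · have := habove z (by omega)
      have := habove (z + 1) (by omega)
      omega

lemma SortedFrom.exists_reflTransGen_of_le {L : ℤ → ℕ} {c : ℤ} (hL : SortedFrom c L)
    (hfin : (support L).Finite) {c' : ℤ} (hc : c' ≤ c) :
    ∃ S, ReflTransGen AdmissibleSwap L S ∧ SortedFrom c' S := by
  induction c', hc using Int.leInductionDown with
  | base => exact ⟨L, .refl, hL⟩
  | pred c' _ ih =>
    obtain ⟨S, hpath, hS⟩ := ih
    obtain ⟨π, rfl⟩ := AdmissibleSwap.exists_perm hpath
    exact ⟨_, hpath.trans (hS.reflTransGen_comp_add_one (support_comp_perm_finite hfin π)),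
      hS.comp_add_one⟩

lemma exists_forall_le_reflTransGen_sortedFrom {L : ℤ → ℕ} (hfin : (support L).Finite)
    (hL : (exceptionalSet L).Subsingleton) :
    ∃ a, ∀ c ≤ a, ∃ S, ReflTransGen AdmissibleSwap L S ∧ SortedFrom c S := by
  obtain ⟨U, hpath, hE⟩ := exists_reflTransGen_exceptionalSet_eq_empty hfin hL
  obtain ⟨π, rfl⟩ := AdmissibleSwap.exists_perm hpath
  have hfinU := support_comp_perm_finite hfin π
  obtain ⟨a, ha⟩ := hfinU.bddBelow
  obtain ⟨S, hpath', hS⟩ := exists_reflTransGen_sortedFrom hfinU hE (a := a)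
    fun z hz => not_ne_iff.1 fun h => absurd (ha h) (by omega)
  obtain ⟨ρ, rfl⟩ := AdmissibleSwap.exists_perm hpath'
  refine ⟨a, fun c hc => ?_⟩
  obtain ⟨T, hpath'', hT⟩ := hS.exists_reflTransGen_of_le (support_comp_perm_finite hfinU ρ) hc
  exact ⟨T, (hpath.trans hpath').trans hpath'', hT⟩

lemma SortedFrom.superlevel_subset_or_subset {F G : ℤ → ℕ} {c : ℤ} (hF : SortedFrom c F)
    (hG : SortedFrom c G) (t : ℕ) :
    {z | t ≤ F z} ⊆ {z | t ≤ G z} ∨ {z | t ≤ G z} ⊆ {z | t ≤ F z} := by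
  by_contra! ⟨hFG, hGF⟩
  obtain ⟨z, hFz, hGz⟩ := not_subset.1 hFG
  obtain ⟨w, hGw, hFw⟩ := not_subset.1 hGF
  simp only [mem_ofPred_eq, not_le] at hFz hGz hGw hFw
  have hcz : c ≤ z := not_lt.1 fun h => by rw [hF.1 z h] at hFz; omega
  have hcw : c ≤ w := not_lt.1 fun h => by rw [hG.1 w h] at hGw; omega
  rcases le_total z w with hzw | hwz
  · exact absurd (hG.2 (mem_Ici.2 hcz) (mem_Ici.2 hcw) hzw) (by omega)
  · exact absurd (hF.2 (mem_Ici.2 hcw) (mem_Ici.2 hcz) hwz) (by omega)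

lemma SortedFrom.comp_perm_eq {L : ℤ → ℕ} {c : ℤ} {π : Perm ℤ} (hfin : (support L).Finite)
    (hL : SortedFrom c L) (hLπ : SortedFrom c (L ∘ π)) : L ∘ π = L := by
  have hlevel : ∀ t ≠ 0, {z | t ≤ L (π z)} = {z | t ≤ L z} := by
    intro t ht
    have hfin' : {z | t ≤ L z}.Finite := hfin.subset fun z hz => by
      simp only [mem_support]; simp only [mem_ofPred_eq] at hz; omega
    have hfinπ : {z | t ≤ L (π z)}.Finite := hfin'.preimage (f := ⇑π) π.injective.injOn
    have hcard : {z | t ≤ L (π z)}.ncard = {z | t ≤ L z}.ncard :=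
      ncard_preimage_of_injective_subset_range (s := {z | t ≤ L z}) π.injective (by simp)
    rcases hLπ.superlevel_subset_or_subset hL t with h | h
    · exact eq_of_subset_of_ncard_le h hcard.ge hfin'
    · exact (eq_of_subset_of_ncard_le h hcard.le hfinπ).symm
  funext z
  apply le_antisymm
  · rcases eq_or_ne (L (π z)) 0 with h | h
    · simp [h]
    · exact (hlevel _ h).subset (le_refl (L (π z)))
  · rcases eq_or_ne (L z) 0 with h | h
    · simp [h]
    · exact (hlevel _ h).symm.subset (le_refl (L z))

theorem reflTransGen_admissibleSwap_comp_perm {L : ℤ → ℕ} (hfin : (support L).Finite)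
    (π : Perm ℤ) (hL : (exceptionalSet L).Subsingleton)
    (hLπ : (exceptionalSet (L ∘ π)).Subsingleton) :
    ReflTransGen AdmissibleSwap L (L ∘ π) := by
  obtain ⟨a, ha⟩ := exists_forall_le_reflTransGen_sortedFrom hfin hL
  obtain ⟨a', ha'⟩ := exists_forall_le_reflTransGen_sortedFrom (support_comp_perm_finite hfin π) hLπ
  obtain ⟨S, hS, hSc⟩ := ha (min a a') (min_le_left _ _)
  obtain ⟨S', hS', hSc'⟩ := ha' (min a a') (min_le_right _ _)
  obtain ⟨ρ, rfl⟩ := AdmissibleSwap.exists_perm hS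
  obtain ⟨ρ', rfl⟩ := AdmissibleSwap.exists_perm hS'
  have hρ : (L ∘ ρ) ∘ (ρ⁻¹ * π * ρ' : Perm ℤ) = L ∘ π ∘ ρ' := by
    funext z; simp
  have hSS' : L ∘ π ∘ ρ' = L ∘ ρ := by
    rw [← hρ]
    exact SortedFrom.comp_perm_eq (support_comp_perm_finite hfin ρ) hSc (hρ ▸ hSc')
  exact hS.trans (hSS' ▸ Std.Symm.symm _ _ hS')

lemma Relation.ReflTransGen.exists_seq {α : Type*} {r : α → α → Prop} {a b : α}
    (h : ReflTransGen r a b) :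
    ∃ (n : ℕ) (f : ℕ → α), f 0 = a ∧ f n = b ∧ ∀ i < n, r (f i) (f (i + 1)) := by
  induction h with
  | refl => exact ⟨0, fun _ => a, rfl, rfl, by omega⟩
  | @tail _ c _ hbc ih =>
    obtain ⟨n, f, h0, hn, hf⟩ := ih
    refine ⟨n + 1, update f (n + 1) c, by simp [h0], by simp, fun i hi => ?_⟩
    rw [update_of_ne (by omega)]
    rcases Nat.lt_succ_iff_lt_or_eq.1 hi with hi | rfl
    · rw [update_of_ne (by omega)]
      exact hf i hi
    · rw [update_self, hn]
      exact hbc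

def permuteRows (σ : Perm ℤ) (P : Set (ℤ × ℤ)) : Set (ℤ × ℤ) :=
  (fun c : ℤ × ℤ => (c.1, σ c.2)) '' P

lemma row_permuteRows (σ : Perm ℤ) (P : Set (ℤ × ℤ)) (y : ℤ) :
    Row (permuteRows σ P) y = Row P (σ.symm y) := by
  ext x
  simp only [Row, permuteRows, mem_ofPred_eq, mem_image, Prod.mk.injEq]
  constructor
  · rintro ⟨⟨a, b⟩, hab, rfl, rfl⟩
    simpa using hab
  · exact fun hx => ⟨(x, σ.symm y), hx, rfl, by simp⟩

lemma rowLen_permuteRows (σ : Perm ℤ) (P : Set (ℤ × ℤ)) :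
    rowLen (permuteRows σ P) = rowLen P ∘ σ.symm := by
  funext y
  simp only [rowLen, row_permuteRows, comp_apply]

lemma permuteRows_one (P : Set (ℤ × ℤ)) : permuteRows 1 P = P := by
  simp [permuteRows]

lemma rswap_image_permuteRows (σ : Perm ℤ) (P : Set (ℤ × ℤ)) (y : ℤ) :
    rswap y (y + 1) '' permuteRows σ P = permuteRows (swap y (y + 1) * σ) P := by
  simp only [permuteRows, image_image]
  rfl

lemma support_rowLen_finite {P : Set (ℤ × ℤ)} (hP : P.Finite) : (support (rowLen P)).Finite :=
  (hP.image Prod.snd).subset fun y hy => by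
    obtain ⟨x, hx⟩ := nonempty_of_ncard_ne_zero hy
    exact ⟨(x, y), hx, rfl⟩

lemma AlmostMoon.exceptionalSet_subsingleton {P : Set (ℤ × ℤ)} (hP : AlmostMoon P) :
    (exceptionalSet (rowLen P)).Subsingleton :=
  fun _ h₁ _ h₂ => hP.2.2.2 _ _ h₁ h₂

lemma AlmostMoon.permuteRows {M : Set (ℤ × ℤ)} (hM : AlmostMoon M) {σ : Perm ℤ}
    (hσ : (exceptionalSet (rowLen (permuteRows σ M))).Subsingleton) :
    AlmostMoon (permuteRows σ M) := by
  refine ⟨hM.1.image _, fun y => ?_, fun y₁ y₂ => ?_, fun _ _ h₁ h₂ => hσ h₁ h₂⟩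
  · simp only [row_permuteRows]
    exact hM.2.1 _
  · simp only [row_permuteRows]
    exact hM.2.2.1 _ _

lemma permuteRows_eq_of_rowLen_eq {M : Set (ℤ × ℤ)} (hfin : M.Finite) (hcomp : RowsComparable M)
    {σ τ : Perm ℤ} (h : rowLen (permuteRows σ M) = rowLen (permuteRows τ M)) :
    permuteRows σ M = permuteRows τ M := by
  have hrow : ∀ y, Row (permuteRows σ M) y = Row (permuteRows τ M) y := fun y => by
    have hlen : (Row M (σ.symm y)).ncard = (Row M (τ.symm y)).ncard := by
      simpa [rowLen, row_permuteRows] using congrFun h y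
    rw [row_permuteRows, row_permuteRows]
    have hfin' : ∀ y, (Row M y).Finite := fun y => hfin.preimage (f := fun x => (x, y))
      fun _ _ _ _ h => (Prod.mk.inj h).1
    rcases hcomp (σ.symm y) (τ.symm y) with hsub | hsub
    · exact eq_of_subset_of_ncard_le hsub hlen.ge (hfin' _)
    · exact (eq_of_subset_of_ncard_le hsub hlen.le (hfin' _)).symm
  ext ⟨x, y⟩
  exact Set.ext_iff.1 (hrow y) x

def AdmissiblePolySwap (P Q : Set (ℤ × ℤ)) : Prop :=
  ∃ y, Q = rswap y (y + 1) '' P ∧ AlmostMoon P ∧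
    (∀ y', ExceptionalRow P y' → y' = y ∨ y' = y + 1) ∧
      (∀ y', ExceptionalRow Q y' → y' = y ∨ y' = y + 1)

lemma exists_reflTransGen_admissiblePolySwap {M : Set (ℤ × ℤ)} (hM : AlmostMoon M)
    {L : ℤ → ℕ} (h : ReflTransGen AdmissibleSwap (rowLen M) L) :
    ∃ τ : Perm ℤ, rowLen (permuteRows τ M) = L ∧
      ReflTransGen AdmissiblePolySwap M (permuteRows τ M) := by
  induction h with
  | refl => exact ⟨1, by rw [permuteRows_one], by rw [permuteRows_one]⟩
  | tail _ hstep ih =>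
    obtain ⟨τ, rfl, hpath⟩ := ih
    obtain ⟨y, rfl, hL, -, hy, hy'⟩ := hstep
    have hlen : rowLen (permuteRows (swap y (y + 1) * τ) M) =
        rowLen (permuteRows τ M) ∘ swap y (y + 1) := by
      funext z
      simp [rowLen_permuteRows, Perm.mul_def]
    refine ⟨swap y (y + 1) * τ, hlen, hpath.tail ⟨y, (rswap_image_permuteRows τ M y).symm,
      hM.permuteRows hL, fun y' h => hy h, fun y' h => ?_⟩⟩
    exact hy' (by rw [← hlen]; exact h)

/-- If `σM` (obtained by permuting the row shapes of the almost-moon polyomino `M`) is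
again an almost-moon polyomino, then `σM` can be reached from `M` by a finite sequence of
interchanges of adjacent rows all of whose intermediate polyominoes are almost-moon with
no exceptional rows other than the two just swapped. -/
theorem row_permutation_connected (M : Set (ℤ × ℤ)) (hM : AlmostMoon M)
    (σ : Equiv.Perm ℤ)
    (hσ : AlmostMoon ((fun c : ℤ × ℤ => (c.1, σ c.2)) '' M)) :
    ∃ (n : ℕ) (P : ℕ → Set (ℤ × ℤ)),
      P 0 = M ∧ P n = (fun c : ℤ × ℤ => (c.1, σ c.2)) '' M ∧
      (∀ i, i ≤ n → AlmostMoon (P i)) ∧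
      ∀ i, i < n → ∃ y : ℤ,
        P (i + 1) = rswap y (y + 1) '' P i ∧
        (∀ y', ExceptionalRow (P i) y' → y' = y ∨ y' = y + 1) ∧
        (∀ y', ExceptionalRow (P (i + 1)) y' → y' = y ∨ y' = y + 1) := by
  have hgood : (exceptionalSet (rowLen M ∘ σ.symm)).Subsingleton := by
    rw [← rowLen_permuteRows]
    exact hσ.exceptionalSet_subsingleton
  have hprofile := reflTransGen_admissibleSwap_comp_perm (support_rowLen_finite hM.1) σ.symm
    hM.exceptionalSet_subsingleton hgood
  obtain ⟨τ, hτ, hpath⟩ := exists_reflTransGen_admissiblePolySwap hM hprofile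
  rw [← rowLen_permuteRows] at hτ
  have hτσ := permuteRows_eq_of_rowLen_eq hM.1 hM.2.2.1 hτ
  obtain ⟨n, P, h0, hn, hstep⟩ := hpath.exists_seq
  refine ⟨n, P, h0, hn.trans hτσ, fun i hi => ?_, fun i hi => ?_⟩
  · rcases hi.lt_or_eq with hi | rfl
    · obtain ⟨-, -, hP, -⟩ := hstep i hi
      exact hP
    · exact hn ▸ hτσ ▸ hσ
  · obtain ⟨y, hy, -, hP, hQ⟩ := hstep i hi
    exact ⟨y, hy, hP, hQ⟩
end

section
/- Let M and N be almost-moon polyominoes related by interchanging adjacent rows R_s (shorter) and R_l (longer), with no other exceptional rows. Let F be a 01-filling of M in which every row has at most one 1, let F' be its coupling filling (obtained by swapping the fillings α of R_s and β of the middle part of R_l), and let G = f_{M,N}(F'), G' = f_{M,N}(F) be the corresponding fillings of N. Then ne(F) = ne(G) or ne(F) = ne(G'). -/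
open Set
open scoped Classical

/-!
Let `σ` interchange the adjacent rows `ys` (the short row, with column set `S`) and `yl`, so that
`N = σ M`, `G = σ F`, and `G'` is `F` with only its cells outside the columns of `S` moved. A
northeast chain meeting at most one of the two rows is carried by `σ` to a chain of the same size,
so `ne(F) = ne(G)` unless a maximum chain, of `F` in `M` or of `G` in `N`, passes through both
rows. Then the 1s `a = (x_a, ys)` and `b = (x_b, yl)` of `F` satisfy `x_b ∈ S`, so `G' = F`, and
this happens on one side only: in `M` if `x_a < x_b`, in `N` if `x_b < x_a`.

If `x_a < x_b` and `ne(G) < ne(F)`, a maximum chain of `F` in `M` meets row `ys`, so its columns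
lie in `S` and it is also a chain in `N`. Conversely a chain of `F` in `N` is a chain in `M`
unless it meets row `ys` but not row `yl`, and then it only loses that cell as a chain of `G`.

If `x_b < x_a` and `ne(F) < ne(G)`, let `W` be a maximum chain of `G` in `N`; moved back by `σ`
without its cell in row `ys`, it is a chain of `F` through `a` with all columns in `S`, hence also
a chain of `F` in `N`, of size at least `ne(F)`. A chain `V` of `F` in `N` longer
than `ne(F)` passes through `a` and uses a column outside `S`, so every row it meets contains `S`.
Exchanging the parts of `V` and `W` below row `ys` gives two chains of `F` in `M`, one through `a`
and one through `b`, of total size at least `|V| + |W| - 1 > 2 ne(F)`. The rows between a cell of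
`V` and the long row are wide enough for this because they are not exceptional.
-/

abbrev Cell := ℤ × ℤ

def NELt (c d : Cell) : Prop := c.1 < d.1 ∧ c.2 < d.2

theorem NELt.trans {a b c : Cell} (hab : NELt a b) (hbc : NELt b c) : NELt a c :=
  ⟨hab.1.trans hbc.1, hab.2.trans hbc.2⟩

theorem NELt.irrefl (c : Cell) : ¬NELt c c := fun h => h.1.false

section Chain

variable {T : Set Cell} {c d : Cell}

theorem IsChain.nelt_of_snd_lt (hT : IsChain NELt T) (hc : c ∈ T) (hd : d ∈ T) (h : c.2 < d.2) :
    NELt c d := by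
  rcases hT hc hd (by rintro rfl; exact h.false) with h' | h'
  · exact h'
  · exact absurd h'.2 h.not_gt

theorem IsChain.eq_of_snd_eq (hT : IsChain NELt T) (hc : c ∈ T) (hd : d ∈ T) (h : c.2 = d.2) :
    c = d := by
  by_contra hne
  rcases hT hc hd hne with h' | h' <;> linarith [h'.2]

theorem IsChain.nelt_of_snd_le (hT : IsChain NELt T) (hc : c ∈ T) (hd : d ∈ T) (hne : c ≠ d)
    (h : c.2 ≤ d.2) : NELt c d :=
  hT.nelt_of_snd_lt hc hd (h.lt_of_ne fun h' => hne (hT.eq_of_snd_eq hc hd h'))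

theorem IsChain.fst_le_of_snd_le (hT : IsChain NELt T) (hc : c ∈ T) (hd : d ∈ T) (h : c.2 ≤ d.2) :
    c.1 ≤ d.1 := by
  rcases eq_or_ne c d with rfl | hne
  · exact le_rfl
  · exact (hT.nelt_of_snd_le hc hd hne h).1.le

theorem isChain_insert_union {p : Cell} {X Y : Finset Cell} (hX : IsChain NELt (X : Set Cell))
    (hY : IsChain NELt (Y : Set Cell)) (hXp : ∀ c ∈ X, NELt c p) (hpY : ∀ c ∈ Y, NELt p c) :
    IsChain NELt (insert p (X ∪ Y) : Finset Cell) := by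
  rw [Finset.coe_insert, Finset.coe_union]
  refine (isChain_union.2 ⟨hX, hY, fun a ha b hb _ => .inl ((hXp a ha).trans (hpY b hb))⟩).insert ?_
  rintro c (hc | hc) -
  · exact .inr (hXp c hc)
  · exact .inl (hpY c hc)

theorem card_insert_union_of_nelt {p : Cell} {X Y : Finset Cell} (hXp : ∀ c ∈ X, NELt c p)
    (hpY : ∀ c ∈ Y, NELt p c) : (insert p (X ∪ Y)).card = X.card + Y.card + 1 := by
  have hp : p ∉ X ∪ Y := by
    rintro hp
    rcases Finset.mem_union.1 hp with h | h
    exacts [NELt.irrefl p (hXp p h), NELt.irrefl p (hpY p h)]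
  have hXY : Disjoint X Y :=
    Finset.disjoint_left.2 fun c hX hY => NELt.irrefl c ((hXp c hX).trans (hpY c hY))
  rw [Finset.card_insert_of_notMem hp, Finset.card_union_of_disjoint hXY]

end Chain

structure IsNEChainSet (P F : Set Cell) (T : Finset Cell) : Prop where
  subset : (T : Set Cell) ⊆ F
  isChain : IsChain NELt (T : Set Cell)
  corner : ∀ c ∈ T, ∀ d ∈ T, (c.1, d.2) ∈ P

def sharedCols (P : Set Cell) (T : Finset Cell) : Set ℤ := {x | ∀ d ∈ T, (x, d.2) ∈ P}

namespace IsNEChainSet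

variable {P F : Set Cell} {T : Finset Cell}

theorem mono (h : IsNEChainSet P F T) {T' : Finset Cell} (hT' : T' ⊆ T) : IsNEChainSet P F T' :=
  ⟨fun _ hc => h.subset (hT' hc), h.isChain.mono (Finset.coe_subset.2 hT'),
    fun c hc d hd => h.corner c (hT' hc) d (hT' hd)⟩

theorem exists_isNEChain (h : IsNEChainSet P F T) : ∃ g, IsNEChain P F T.card g := by
  set R := T.image Prod.snd
  have hR : R.card = T.card := Finset.card_image_of_injOn fun c hc d hd =>
    h.isChain.eq_of_snd_eq hc hd
  set e := R.orderEmbOfFin hR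
  have hg : ∀ i, ∃ c ∈ (T : Set Cell), c.2 = e i := fun i => by
    have := R.orderEmbOfFin_mem hR i
    simp only [R, Finset.mem_image] at this
    simpa using this
  set g : Fin T.card → Cell := fun i => Function.invFunOn Prod.snd T (e i)
  have hgT : ∀ i, g i ∈ T := fun i => Function.invFunOn_mem (hg i)
  have hsnd : StrictMono fun i => (g i).2 := fun i j hij => by
    simp only [g, Function.invFunOn_eq (hg i), Function.invFunOn_eq (hg j)]
    exact e.strictMono hij
  exact ⟨g, fun i => h.subset (hgT i),
    fun i j hij => (h.isChain.nelt_of_snd_lt (hgT i) (hgT j) (hsnd hij)).1, hsnd,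
    fun i j => h.corner _ (hgT i) _ (hgT j)⟩

end IsNEChainSet

theorem exists_isNEChainSet_insert_union {P F : Set Cell} {C : Set ℤ} {p : Cell}
    {X Y : Finset Cell} (hX : IsChain NELt (X : Set Cell)) (hY : IsChain NELt (Y : Set Cell))
    (hp : p ∈ F ∧ p.1 ∈ C ∧ C ⊆ Row P p.2)
    (hXp : ∀ c ∈ X, NELt c p ∧ c ∈ F ∧ c.1 ∈ C ∧ C ⊆ Row P c.2)
    (hpY : ∀ c ∈ Y, NELt p c ∧ c ∈ F ∧ c.1 ∈ C ∧ C ⊆ Row P c.2) :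
    ∃ T, IsNEChainSet P F T ∧ T.card = X.card + Y.card + 1 := by
  have hall : ∀ c ∈ insert p (X ∪ Y), c ∈ F ∧ c.1 ∈ C ∧ C ⊆ Row P c.2 := fun c hc => by
    rcases Finset.mem_insert.1 hc with rfl | hc
    · exact hp
    rcases Finset.mem_union.1 hc with hc | hc
    exacts [(hXp c hc).2, (hpY c hc).2]
  exact ⟨_, ⟨fun c hc => (hall c hc).1, isChain_insert_union hX hY (fun c hc => (hXp c hc).1)
    fun c hc => (hpY c hc).1, fun c hc d hd => (hall d hd).2.2 (hall c hc).2.1⟩,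
    card_insert_union_of_nelt (fun c hc => (hXp c hc).1) fun c hc => (hpY c hc).1⟩

theorem IsNEChain.exists_isNEChainSet {P F : Set Cell} {k : ℕ} {g : Fin k → Cell}
    (h : IsNEChain P F k g) : ∃ T, IsNEChainSet P F T ∧ T.card = k := by
  obtain ⟨hmem, hfst, hsnd, hcorner⟩ := h
  refine ⟨Finset.univ.image g, ⟨?_, ?_, ?_⟩, ?_⟩
  · simpa [Set.range_subset_iff] using hmem
  · rw [Finset.coe_image, Finset.coe_univ, Set.image_univ]
    rintro _ ⟨i, rfl⟩ _ ⟨j, rfl⟩ hij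
    rcases lt_trichotomy i j with h | rfl | h
    exacts [.inl ⟨hfst h, hsnd h⟩, absurd rfl hij, .inr ⟨hfst h, hsnd h⟩]
  · simpa using hcorner
  · rw [Finset.card_image_of_injective _ fun i j h => hsnd.injective (congrArg Prod.snd h)]
    simp

section NESize

variable {P F : Set Cell} {T : Finset Cell}

theorem bddAbove_neChainSizes (hF : F.Finite) :
    BddAbove {k | ∃ g : Fin k → Cell, IsNEChain P F k g} := by
  refine ⟨hF.toFinset.card, fun k ⟨g, hg⟩ => ?_⟩
  obtain ⟨T, hT, rfl⟩ := hg.exists_isNEChainSet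
  exact Finset.card_le_card fun c hc => hF.mem_toFinset.2 (hT.subset hc)

theorem IsNEChainSet.card_le_neSize (hF : F.Finite) (h : IsNEChainSet P F T) :
    T.card ≤ neSize P F :=
  le_csSup (bddAbove_neChainSizes hF) h.exists_isNEChain

theorem exists_isNEChainSet_card_eq_neSize (hF : F.Finite) :
    ∃ T, IsNEChainSet P F T ∧ T.card = neSize P F := by
  have hne : {k | ∃ g : Fin k → Cell, IsNEChain P F k g}.Nonempty :=
    ⟨0, Fin.elim0, fun i => i.elim0, fun i => i.elim0, fun i => i.elim0, fun i => i.elim0⟩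
  obtain ⟨g, hg⟩ := Nat.sSup_mem hne (bddAbove_neChainSizes hF)
  exact hg.exists_isNEChainSet

theorem neSize_le_of_forall (hF : F.Finite) {n : ℕ}
    (h : ∀ T, IsNEChainSet P F T → T.card ≤ n) : neSize P F ≤ n := by
  obtain ⟨T, hT, hTn⟩ := exists_isNEChainSet_card_eq_neSize (P := P) hF
  exact hTn ▸ h T hT

end NESize

section Rows

variable {M : Set Cell}

theorem row_finite (hfin : M.Finite) (y : ℤ) : (Row M y).Finite :=
  hfin.preimage (Function.Injective.injOn fun _ _ h => (Prod.ext_iff.1 h).1)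

theorem row_subset_of_rowLen_le (hfin : M.Finite) (hcomp : RowsComparable M) {y₁ y₂ : ℤ}
    (h : rowLen M y₁ ≤ rowLen M y₂) : Row M y₁ ⊆ Row M y₂ := by
  rcases hcomp y₁ y₂ with h₁₂ | h₂₁
  · exact h₁₂
  · rw [Set.eq_of_subset_of_ncard_le h₂₁ h (row_finite hfin y₁)]

theorem row_subset_or_of_not_exceptional (hfin : M.Finite) (hcomp : RowsComparable M)
    {y y₁ y₂ : ℤ} (hy : ¬ExceptionalRow M y) (h₁ : y₁ < y) (h₂ : y < y₂) :
    Row M y₁ ⊆ Row M y ∨ Row M y₂ ⊆ Row M y := by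
  by_contra h
  push Not at h
  exact hy ⟨⟨y₂, h₂, lt_of_not_ge fun h' => h.2 (row_subset_of_rowLen_le hfin hcomp h')⟩,
    ⟨y₁, h₁, lt_of_not_ge fun h' => h.1 (row_subset_of_rowLen_le hfin hcomp h')⟩⟩

theorem RowsComparable.subset_sharedCols {P : Set Cell} (hP : RowsComparable P) {T : Finset Cell}
    {x₀ y : ℤ} (hx₀ : x₀ ∈ sharedCols P T) (hy : x₀ ∉ Row P y) : Row P y ⊆ sharedCols P T :=
  fun _ hx d hd => ((hP y d.2).resolve_right fun h => hy (h (hx₀ d hd))) hx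

theorem RowConvex.ordConnected_sharedCols {P : Set Cell} (hP : RowConvex P) (T : Finset Cell) :
    (sharedCols P T).OrdConnected :=
  ⟨fun _ hx _ hy _ hz d hd => hP d.2 _ _ _ (hx d hd) (hy d hd) hz.1 hz.2⟩

theorem injOn_snd_of_rowLen_le_one {F : Set Cell} (hF : F.Finite) (hrow : ∀ y, rowLen F y ≤ 1) :
    Set.InjOn Prod.snd F := fun c hc d hd h =>
  Prod.ext ((Set.ncard_le_one (row_finite hF c.2)).1 (hrow c.2) c.1 hc d.1 (h ▸ hd)) h

end Rows

section RowSwap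

variable {ys yl : ℤ} {P M H : Set Cell}

theorem rswap_apply (ys yl : ℤ) (c : Cell) : rswap ys yl c = (c.1, Equiv.swap ys yl c.2) := by
  simp [rswap, Equiv.swap_apply_def]

theorem rswap_rswap (ys yl : ℤ) (c : Cell) : rswap ys yl (rswap ys yl c) = c := by
  simp [rswap_apply]

theorem rswap_of_ne {c : Cell} (h₁ : c.2 ≠ ys) (h₂ : c.2 ≠ yl) : rswap ys yl c = c := by
  simp [rswap_apply, Equiv.swap_apply_of_ne_of_ne h₁ h₂]

theorem image_rswap (ys yl : ℤ) (P : Set Cell) : rswap ys yl '' P = rswap ys yl ⁻¹' P :=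
  congrFun (Set.image_eq_preimage_of_inverse (rswap_rswap ys yl) (rswap_rswap ys yl)) P

theorem mem_image_rswap {c : Cell} : c ∈ rswap ys yl '' P ↔ rswap ys yl c ∈ P := by
  rw [image_rswap]; rfl

theorem image_rswap_image_rswap (ys yl : ℤ) (P : Set Cell) :
    rswap ys yl '' (rswap ys yl '' P) = P := by
  ext c; simp only [mem_image_rswap, rswap_rswap]

theorem row_image_rswap (y : ℤ) : Row (rswap ys yl '' P) y = Row P (Equiv.swap ys yl y) := by
  ext x
  change (x, y) ∈ rswap ys yl '' P ↔ _
  rw [mem_image_rswap, rswap_apply]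
  rfl

theorem mem_of_mem_image_rswap {c : Cell} (h : c ∈ rswap ys yl '' P) (h₁ : c.2 ≠ ys)
    (h₂ : c.2 ≠ yl) : c ∈ P := by
  rwa [mem_image_rswap, rswap_of_ne h₁ h₂] at h

theorem mem_image_rswap_iff_of_ne {x y : ℤ} (h₁ : y ≠ ys) (h₂ : y ≠ yl) :
    (x, y) ∈ rswap ys yl '' P ↔ (x, y) ∈ P := by
  rw [mem_image_rswap, rswap_of_ne h₁ h₂]

theorem mem_image_rswap_iff_of_mem_row (hsub : Row M ys ⊆ Row M yl) {x : ℤ} (hx : x ∈ Row M ys)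
    (y : ℤ) : (x, y) ∈ rswap ys yl '' M ↔ (x, y) ∈ M := by
  rw [mem_image_rswap, rswap_apply]
  by_cases h₁ : y = ys
  · subst h₁; simpa using ⟨fun _ => hx, fun _ => hsub hx⟩
  by_cases h₂ : y = yl
  · subst h₂; simpa using ⟨fun _ => hsub hx, fun _ => hx⟩
  · rw [Equiv.swap_apply_of_ne_of_ne h₁ h₂]

theorem RowConvex.image_rswap (h : RowConvex M) : RowConvex (rswap ys yl '' M) := by
  intro y x₁ x₂ x h₁ h₂
  rw [row_image_rswap] at h₁ h₂ ⊢
  exact h _ _ _ _ h₁ h₂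

theorem RowsComparable.image_rswap (h : RowsComparable M) : RowsComparable (rswap ys yl '' M) := by
  intro y₁ y₂
  simp only [row_image_rswap]
  exact h _ _

theorem swap_lt_swap (hadj : yl = ys + 1) {a b : ℤ} (hab : a < b) (h : ¬(a = ys ∧ b = yl)) :
    Equiv.swap ys yl a < Equiv.swap ys yl b := by
  simp only [Equiv.swap_apply_def]
  split_ifs <;> omega

theorem IsNEChainSet.image_rswap (hadj : yl = ys + 1) {T : Finset Cell}
    (hT : IsNEChainSet P H T) (hmeet : ¬((∃ c ∈ T, c.2 = ys) ∧ ∃ d ∈ T, d.2 = yl)) :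
    IsNEChainSet (rswap ys yl '' P) (rswap ys yl '' H) (T.image (rswap ys yl)) := by
  have hlt : ∀ c ∈ T, ∀ d ∈ T, NELt c d → NELt (rswap ys yl c) (rswap ys yl d) := by
    intro c hc d hd h
    rw [rswap_apply, rswap_apply]
    exact ⟨h.1, swap_lt_swap hadj h.2 fun h' => hmeet ⟨⟨c, hc, h'.1⟩, d, hd, h'.2⟩⟩
  refine ⟨?_, ?_, ?_⟩
  · rw [Finset.coe_image]
    exact Set.image_mono hT.subset
  · rw [Finset.coe_image]
    rintro _ ⟨c, hc, rfl⟩ _ ⟨d, hd, rfl⟩ hne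
    exact (hT.isChain hc hd fun h => hne (h ▸ rfl)).imp (hlt c hc d hd) (hlt d hd c hc)
  · simp only [Finset.mem_image]
    rintro _ ⟨c, hc, rfl⟩ _ ⟨d, hd, rfl⟩
    rw [mem_image_rswap]
    simpa [rswap_apply] using hT.corner c hc d hd

theorem rswap_injective (ys yl : ℤ) : Function.Injective (rswap ys yl) :=
  Function.LeftInverse.injective (rswap_rswap ys yl)

theorem neSize_le_neSize_image_rswap (hadj : yl = ys + 1) (hH : H.Finite)
    (h : ∀ T, IsNEChainSet P H T → ¬((∃ c ∈ T, c.2 = ys) ∧ ∃ d ∈ T, d.2 = yl)) :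
    neSize P H ≤ neSize (rswap ys yl '' P) (rswap ys yl '' H) := by
  obtain ⟨T, hT, hTn⟩ := exists_isNEChainSet_card_eq_neSize (P := P) hH
  rw [← hTn, ← Finset.card_image_of_injective T (rswap_injective ys yl)]
  exact (hT.image_rswap hadj (h T hT)).card_le_neSize (hH.image _)

theorem isNEChainSet_image_rswap_iff (hsub : Row M ys ⊆ Row M yl) {T : Finset Cell}
    (hT : ∀ c ∈ T, ∀ d ∈ T, c.1 ∈ Row M ys ∨ d.2 ≠ ys ∧ d.2 ≠ yl) :
    IsNEChainSet (rswap ys yl '' M) H T ↔ IsNEChainSet M H T := by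
  have key : ∀ c ∈ T, ∀ d ∈ T, (c.1, d.2) ∈ rswap ys yl '' M ↔ (c.1, d.2) ∈ M :=
    fun c hc d hd => (hT c hc d hd).elim (fun h => mem_image_rswap_iff_of_mem_row hsub h _)
      fun h => mem_image_rswap_iff_of_ne h.1 h.2
  exact ⟨fun h => ⟨h.subset, h.isChain, fun c hc d hd => (key c hc d hd).1 (h.corner c hc d hd)⟩,
    fun h => ⟨h.subset, h.isChain, fun c hc d hd => (key c hc d hd).2 (h.corner c hc d hd)⟩⟩

theorem IsNEChainSet.to_image_rswap (hsub : Row M ys ⊆ Row M yl) {T : Finset Cell}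
    (hT : IsNEChainSet M H T) (h : ∃ d ∈ T, d.2 = ys) : IsNEChainSet (rswap ys yl '' M) H T := by
  obtain ⟨d, hd, hdy⟩ := h
  exact (isNEChainSet_image_rswap_iff hsub fun c hc _ _ => .inl (hdy ▸ hT.corner c hc d hd)).2 hT

theorem IsNEChainSet.of_image_rswap (hsub : Row M ys ⊆ Row M yl) {V : Finset Cell}
    (hV : IsNEChainSet (rswap ys yl '' M) H V) (h : (∃ d ∈ V, d.2 = yl) ∨ ∀ d ∈ V, d.2 ≠ ys) :
    IsNEChainSet M H V := by
  refine (isNEChainSet_image_rswap_iff hsub fun c hc d hd => ?_).1 hV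
  by_cases hyl : ∃ e ∈ V, e.2 = yl
  · obtain ⟨e, he, hey⟩ := hyl
    have := hV.corner c hc e he
    rw [hey, mem_image_rswap, rswap_apply] at this
    exact .inl (by simpa using this : (c.1, ys) ∈ M)
  · push Not at hyl
    exact .inr ⟨h.resolve_left (fun ⟨e, he, hey⟩ => hyl e he hey) d hd, hyl d hd⟩

theorem neSize_image_rswap_eq_of_lt (hadj : yl = ys + 1) (hsub : Row M ys ⊆ Row M yl)
    (hH : H.Finite) (hlt : neSize (rswap ys yl '' M) (rswap ys yl '' H) < neSize M H) :
    neSize (rswap ys yl '' M) H = neSize M H := by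
  refine le_antisymm (neSize_le_of_forall hH fun V hV => ?_) ?_
  · by_cases h : (∃ d ∈ V, d.2 = yl) ∨ ∀ d ∈ V, d.2 ≠ ys
    · exact (hV.of_image_rswap hsub h).card_le_neSize hH
    push Not at h
    obtain ⟨hyl, c, hc, hcy⟩ := h
    have hoff : ∀ d ∈ V.erase c, d.2 ≠ ys ∧ d.2 ≠ yl := fun d hd =>
      ⟨fun h => (Finset.ne_of_mem_erase hd) (hV.isChain.eq_of_snd_eq
        (Finset.mem_of_mem_erase hd) hc (h.trans hcy.symm)), hyl d (Finset.mem_of_mem_erase hd)⟩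
    have hrest : IsNEChainSet (rswap ys yl '' M) (rswap ys yl '' H) (V.erase c) :=
      ⟨fun d hd => by
        rw [mem_image_rswap, rswap_of_ne (hoff d hd).1 (hoff d hd).2]
        exact hV.subset (Finset.mem_of_mem_erase hd),
      (hV.mono (Finset.erase_subset c V)).isChain, (hV.mono (Finset.erase_subset c V)).corner⟩
    have := hrest.card_le_neSize (hH.image _)
    have := Finset.card_erase_add_one hc
    omega
  · obtain ⟨T, hT, hTn⟩ := exists_isNEChainSet_card_eq_neSize (P := M) hH
    have hys : ∃ d ∈ T, d.2 = ys := by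
      by_contra hys
      have := (hT.image_rswap hadj fun h => hys h.1).card_le_neSize (hH.image _)
      rw [Finset.card_image_of_injective T (rswap_injective ys yl)] at this
      omega
    exact hTn ▸ (hT.to_image_rswap hsub hys).card_le_neSize hH

theorem exists_isNEChainSet_meets_both_of_lt (hadj : yl = ys + 1) (hH : H.Finite)
    (hlt : neSize M H < neSize (rswap ys yl '' M) (rswap ys yl '' H)) :
    ∃ W, IsNEChainSet (rswap ys yl '' M) (rswap ys yl '' H) W ∧ neSize M H < W.card ∧
      (∃ c ∈ W, c.2 = ys) ∧ ∃ d ∈ W, d.2 = yl := by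
  obtain ⟨W, hW, hWn⟩ := exists_isNEChainSet_card_eq_neSize (P := rswap ys yl '' M) (hH.image _)
  refine ⟨W, hW, hWn ▸ hlt, not_not.1 fun h => ?_⟩
  have himg := hW.image_rswap hadj h
  rw [image_rswap_image_rswap, image_rswap_image_rswap] at himg
  have := himg.card_le_neSize hH
  rw [Finset.card_image_of_injective W (rswap_injective ys yl)] at this
  omega

theorem neSize_le_neSize_image_rswap_of_lt (hadj : yl = ys + 1) (hsub : Row M ys ⊆ Row M yl)
    (hH : H.Finite) (hlt : neSize M H < neSize (rswap ys yl '' M) (rswap ys yl '' H)) :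
    neSize M H ≤ neSize (rswap ys yl '' M) H := by
  obtain ⟨W, hW, hWn, ⟨c, hc, hcy⟩, d, hd, hdy⟩ :=
    exists_isNEChainSet_meets_both_of_lt hadj hH hlt
  have hc' : ¬∃ e ∈ W.erase c, e.2 = ys := fun ⟨e, he, hey⟩ => Finset.ne_of_mem_erase he
    (hW.isChain.eq_of_snd_eq (Finset.mem_of_mem_erase he) hc (hey.trans hcy.symm))
  have himg := (hW.mono (Finset.erase_subset c W)).image_rswap hadj fun h => hc' h.1
  rw [image_rswap_image_rswap, image_rswap_image_rswap] at himg
  have hd' : d ∈ W.erase c := Finset.mem_erase.2 ⟨by rintro rfl; omega, hd⟩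
  have := (himg.to_image_rswap hsub ⟨rswap ys yl d, Finset.mem_image_of_mem _ hd', by
    simp [rswap_apply, hdy]⟩).card_le_neSize hH
  rw [Finset.card_image_of_injective _ (rswap_injective ys yl)] at this
  have := Finset.card_erase_add_one hc
  omega

end RowSwap

/-- In the coupling argument `A` and `B` are the parts below the short row of two chains, and
`x₀` is the column of the long-row cell: the conditions on `X₁` keep its columns inside the short
row, so that it extends through the short-row cell, and those on `X₂` let it extend through the
long-row cell. -/
structure IsExchange (x₀ : ℤ) (A B X₁ X₂ : Finset Cell) : Prop where
  subset₁ : X₁ ⊆ A ∪ B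
  subset₂ : X₂ ⊆ A ∪ B
  isChain₁ : IsChain NELt (X₁ : Set Cell)
  isChain₂ : IsChain NELt (X₂ : Set Cell)
  right₁ : ∀ c ∈ X₁, x₀ ≤ c.1 ∨ ∃ b ∈ B, b.1 ≤ c.1
  left₂ : ∀ c ∈ X₂, c ∈ A ∧ c.1 < x₀ ∨ c ∈ B ∧ ∃ a ∈ A, a.2 < c.2
  card_le : A.card + B.card ≤ X₁.card + X₂.card

namespace IsExchange

variable {x₀ : ℤ} {A B X₁ X₂ : Finset Cell} {d : Cell}

theorem of_empty_left (hB : IsChain NELt (B : Set Cell)) : IsExchange x₀ ∅ B B ∅ :=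
  ⟨by simp, by simp, hB, by simp, fun c hc => .inr ⟨c, hc, le_rfl⟩, by simp, by simp⟩

theorem of_le_fst (hA : IsChain NELt (A : Set Cell)) (hB : IsChain NELt (B : Set Cell))
    (hAB : ∀ a ∈ A, ∀ b ∈ B, a.2 = b.2 → a = b) (hBx : ∀ b ∈ B, b.1 < x₀) (hd : d ∈ A)
    (hdmin : ∀ a ∈ A, d.2 ≤ a.2) (hx : x₀ ≤ d.1) :
    IsExchange x₀ A B ({b ∈ B | b.2 < d.2} ∪ A) {b ∈ B | d.2 < b.2} := by
  have hdA : ∀ a ∈ A, x₀ ≤ a.1 := fun a ha => hx.trans (hA.fst_le_of_snd_le hd ha (hdmin a ha))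
  have hBd : ∀ b ∈ B, b.2 ≠ d.2 := fun b hb h => by
    have := hBx b hb
    rw [← hAB d hd b hb h.symm] at this
    omega
  refine ⟨?_, ?_, ?_, hB.mono (Finset.coe_subset.2 (Finset.filter_subset _ _)), ?_, ?_, ?_⟩
  · exact Finset.union_subset (Finset.filter_subset _ _ |>.trans Finset.subset_union_right)
      Finset.subset_union_left
  · exact (Finset.filter_subset _ _).trans Finset.subset_union_right
  · rw [Finset.coe_union]
    refine isChain_union.2 ⟨hB.mono (Finset.coe_subset.2 (Finset.filter_subset _ _)), hA,
      fun b hb a ha _ => .inl ?_⟩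
    rw [Finset.mem_coe, Finset.mem_filter] at hb
    exact ⟨(hBx b hb.1).trans_le (hdA a ha), hb.2.trans_le (hdmin a ha)⟩
  · intro c hc
    rcases Finset.mem_union.1 hc with hc | hc
    · exact .inr ⟨c, (Finset.mem_filter.1 hc).1, le_rfl⟩
    · exact .inl (hdA c hc)
  · intro c hc
    rw [Finset.mem_filter] at hc
    exact .inr ⟨hc.1, d, hd, hc.2⟩
  · have hdisj : Disjoint {b ∈ B | b.2 < d.2} A := Finset.disjoint_left.2 fun b hb ha =>
      (hdmin b ha).not_gt (Finset.mem_filter.1 hb).2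
    have hsplit : B ⊆ {b ∈ B | b.2 < d.2} ∪ {b ∈ B | d.2 < b.2} := fun b hb => by
      rcases lt_or_gt_of_ne (hBd b hb) with h | h
      · exact Finset.mem_union_left _ (Finset.mem_filter.2 ⟨hb, h⟩)
      · exact Finset.mem_union_right _ (Finset.mem_filter.2 ⟨hb, h⟩)
    have := (Finset.card_le_card hsplit).trans (Finset.card_union_le _ _)
    rw [Finset.card_union_of_disjoint hdisj]
    omega

theorem insert_left (h : IsExchange x₀ (A.erase d) B X₁ X₂) (hA : IsChain NELt (A : Set Cell))
    (hd : d ∈ A) (hdmin : ∀ a ∈ A, d.2 ≤ a.2) (hdx : d.1 < x₀) (hdB : ∀ b ∈ B, d.1 < b.1) :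
    IsExchange x₀ A B X₁ (insert d X₂) := by
  have hsub : A.erase d ∪ B ⊆ A ∪ B := Finset.union_subset_union (Finset.erase_subset d A) le_rfl
  have hdX₂ : d ∉ X₂ := fun hdX => by
    rcases h.left₂ d hdX with ⟨hd', -⟩ | ⟨hdB', -⟩
    exacts [Finset.notMem_erase d A hd', (hdB d hdB').false]
  refine ⟨h.subset₁.trans hsub, Finset.insert_subset (Finset.mem_union_left _ hd)
    (h.subset₂.trans hsub), h.isChain₁, ?_, h.right₁, ?_, ?_⟩
  · rw [Finset.coe_insert]
    refine h.isChain₂.insert fun c hc hne => .inl ?_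
    rcases h.left₂ c hc with ⟨hcA, -⟩ | ⟨hcB, a, haA, hac⟩
    · exact hA.nelt_of_snd_le hd (Finset.mem_of_mem_erase hcA) hne
        (hdmin c (Finset.mem_of_mem_erase hcA))
    · exact ⟨hdB c hcB, (hdmin a (Finset.mem_of_mem_erase haA)).trans_lt hac⟩
  · intro c hc
    rcases Finset.mem_insert.1 hc with rfl | hc
    · exact .inl ⟨hd, hdx⟩
    rcases h.left₂ c hc with ⟨hcA, hcx⟩ | ⟨hcB, a, haA, hac⟩
    · exact .inl ⟨Finset.mem_of_mem_erase hcA, hcx⟩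
    · exact .inr ⟨hcB, a, Finset.mem_of_mem_erase haA, hac⟩
  · have := h.card_le
    rw [Finset.card_insert_of_notMem hdX₂, ← Finset.card_erase_add_one hd]
    omega

theorem insert_right {e : Cell} (h : IsExchange x₀ A (B.erase e) X₁ X₂)
    (hB : IsChain NELt (B : Set Cell)) (hBx : ∀ b ∈ B, b.1 < x₀) (he : e ∈ B)
    (hemin : ∀ b ∈ B, e.2 ≤ b.2) (heA : ∀ a ∈ A, e.2 < a.2) :
    IsExchange x₀ A B (insert e X₁) X₂ := by
  have hsub : A ∪ B.erase e ⊆ A ∪ B := Finset.union_subset_union le_rfl (Finset.erase_subset e B)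
  have heB : ∀ b ∈ B.erase e, NELt e b := fun b hb =>
    hB.nelt_of_snd_le he (Finset.mem_of_mem_erase hb) (Finset.ne_of_mem_erase hb).symm
      (hemin b (Finset.mem_of_mem_erase hb))
  have heX₁ : e ∉ X₁ := fun heX => by
    rcases Finset.mem_union.1 (h.subset₁ heX) with heA' | heB'
    exacts [(heA e heA').false, Finset.notMem_erase e B heB']
  refine ⟨Finset.insert_subset (Finset.mem_union_right _ he) (h.subset₁.trans hsub),
    h.subset₂.trans hsub, ?_, h.isChain₂, ?_, ?_, ?_⟩
  · rw [Finset.coe_insert]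
    refine h.isChain₁.insert fun c hc _ => .inl ⟨?_, ?_⟩
    · rcases h.right₁ c hc with hc' | ⟨b, hb, hbc⟩
      · exact (hBx e he).trans_le hc'
      · exact (heB b hb).1.trans_le hbc
    · rcases Finset.mem_union.1 (h.subset₁ hc) with hcA | hcB
      exacts [heA c hcA, (heB c hcB).2]
  · intro c hc
    rcases Finset.mem_insert.1 hc with rfl | hc
    · exact .inr ⟨c, he, le_rfl⟩
    rcases h.right₁ c hc with hc' | ⟨b, hb, hbc⟩
    exacts [.inl hc', .inr ⟨b, Finset.mem_of_mem_erase hb, hbc⟩]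
  · intro c hc
    rcases h.left₂ c hc with hc' | ⟨hcB, hc'⟩
    exacts [.inl hc', .inr ⟨Finset.mem_of_mem_erase hcB, hc'⟩]
  · have := h.card_le
    rw [Finset.card_insert_of_notMem heX₁, ← Finset.card_erase_add_one he]
    omega

theorem of_self (hA : IsChain NELt (A : Set Cell)) (hB : IsChain NELt (B : Set Cell))
    (hAB : ∀ a ∈ A, ∀ b ∈ B, a.2 = b.2 → a = b) (hd : d ∈ A) (hdmin : ∀ a ∈ A, d.2 ≤ a.2)
    (hdx : d.1 < x₀) {b₀ : Cell} (hb₀ : b₀ ∈ B) (hb₀d : b₀.1 ≤ d.1) (hBd : ∀ b ∈ B, d.2 ≤ b.2) :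
    IsExchange x₀ A B A B := by
  refine ⟨Finset.subset_union_left, Finset.subset_union_right, hA, hB,
    fun a ha => .inr ⟨b₀, hb₀, hb₀d.trans (hA.fst_le_of_snd_le hd ha (hdmin a ha))⟩,
    fun b hb => ?_, le_rfl⟩
  rcases (hBd b hb).eq_or_lt with h | h
  · exact .inl (hAB d hd b hb h ▸ ⟨hd, hdx⟩)
  · exact .inr ⟨hb, d, hd, h⟩

end IsExchange

theorem exists_isExchange (x₀ : ℤ) (A B : Finset Cell) (hA : IsChain NELt (A : Set Cell))
    (hB : IsChain NELt (B : Set Cell)) (hAB : ∀ a ∈ A, ∀ b ∈ B, a.2 = b.2 → a = b)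
    (hBx : ∀ b ∈ B, b.1 < x₀) : ∃ X₁ X₂, IsExchange x₀ A B X₁ X₂ := by
  induction hn : A.card + B.card using Nat.strong_induction_on generalizing A B with
  | _ n ih =>
  rcases A.eq_empty_or_nonempty with rfl | hAne
  · exact ⟨B, ∅, .of_empty_left hB⟩
  obtain ⟨d, hd, hdmin⟩ := A.exists_min_image Prod.snd hAne
  by_cases hx : x₀ ≤ d.1
  · exact ⟨_, _, .of_le_fst hA hB hAB hBx hd hdmin hx⟩
  push Not at hx
  by_cases hdB : ∀ b ∈ B, d.1 < b.1
  · have hlt : (A.erase d).card + B.card < n := by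
      have := Finset.card_erase_add_one hd
      omega
    obtain ⟨X₁, X₂, h⟩ := ih _ hlt (A.erase d) B (hA.mono (by simp))
      hB (fun a ha => hAB a (Finset.mem_of_mem_erase ha)) hBx rfl
    exact ⟨X₁, _, h.insert_left hA hd hdmin hx hdB⟩
  push Not at hdB
  obtain ⟨b₀, hb₀, hb₀d⟩ := hdB
  obtain ⟨e, he, hemin⟩ := B.exists_min_image Prod.snd ⟨b₀, hb₀⟩
  by_cases hed : e.2 < d.2
  · have hlt : A.card + (B.erase e).card < n := by
      have := Finset.card_erase_add_one he
      omega
    obtain ⟨X₁, X₂, h⟩ := ih _ hlt A (B.erase e) hA (hB.mono (by simp))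
      (fun a ha b hb => hAB a ha b (Finset.mem_of_mem_erase hb))
      (fun b hb => hBx b (Finset.mem_of_mem_erase hb)) rfl
    exact ⟨_, X₂, h.insert_right hB hBx he hemin fun a ha => hed.trans_le (hdmin a ha)⟩
  · push Not at hed
    exact ⟨A, B, .of_self hA hB hAB hd hdmin hx hb₀ hb₀d fun b hb => hed.trans (hemin b hb)⟩

section Coupled

variable {M F : Set Cell} {ys yl xa xb : ℤ} {V W X₁ X₂ : Finset Cell}

theorem row_subset_sharedCols_image_rswap (hcomp : RowsComparable M)
    (hV : IsNEChainSet (rswap ys yl '' M) F V) {v : Cell} (hv : v ∈ V) (hvS : v.1 ∉ Row M ys) :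
    Row M ys ⊆ sharedCols (rswap ys yl '' M) V := by
  have hrow : Row (rswap ys yl '' M) yl = Row M ys := by
    rw [row_image_rswap, Equiv.swap_apply_right]
  simpa [hrow] using hcomp.image_rswap.subset_sharedCols (hV.corner v hv) (y := yl)
    (by rwa [hrow])

theorem exists_chain_through_short_row (hadj : yl = ys + 1) (hconv : RowConvex M)
    (hW : IsNEChainSet (rswap ys yl '' M) (rswap ys yl '' F) W) (hWb : (xb, ys) ∈ W)
    (hWa : (xa, yl) ∈ W) (hV : IsNEChainSet (rswap ys yl '' M) F V) (hVa : (xa, ys) ∈ V)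
    (hVS : Row M ys ⊆ sharedCols (rswap ys yl '' M) V)
    (hX : IsExchange xb {c ∈ V | c.2 < ys} {c ∈ W | c.2 < ys} X₁ X₂) :
    ∃ T, IsNEChainSet M F T ∧ T.card = X₁.card + {c ∈ W | yl < c.2}.card + 1 := by
  set C := sharedCols (rswap ys yl '' M) W
  have hCS : C ⊆ Row M ys := fun x hx => by
    have := hx _ hWa
    rw [mem_image_rswap, rswap_apply] at this
    exact (by simpa using this : (x, ys) ∈ M)
  have hWrow : ∀ c ∈ W, c.2 ≠ ys → c.2 ≠ yl → c ∈ F ∧ C ⊆ Row M c.2 := fun c hc h₁ h₂ =>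
    ⟨mem_of_mem_image_rswap (hW.subset hc) h₁ h₂,
      fun x hx => (mem_image_rswap_iff_of_ne h₁ h₂).1 (hx c hc)⟩
  have hp : (xa, ys) ∈ F := by
    have := hW.subset hWa
    rw [mem_image_rswap, rswap_apply] at this
    simpa using this
  refine exists_isNEChainSet_insert_union (C := C) hX.isChain₁
    (hW.isChain.mono (Finset.coe_subset.2 (Finset.filter_subset _ _)))
    ⟨hp, hW.corner (xa, yl) hWa, hCS⟩ (fun c hc => ?_) fun c hc => ?_
  · have hlt : NELt c (xa, ys) := by
      rcases Finset.mem_union.1 (hX.subset₁ hc) with h | h <;> rw [Finset.mem_filter] at h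
      · exact hV.isChain.nelt_of_snd_lt h.1 hVa h.2
      · exact ⟨(hW.isChain.nelt_of_snd_lt h.1 hWa (by simp only; omega)).1, h.2⟩
    have hcol : c.1 ∈ C := by
      obtain ⟨w, hw, hwc⟩ : ∃ w ∈ C, w ≤ c.1 := by
        rcases hX.right₁ c hc with h | ⟨b, hb, hbc⟩
        · exact ⟨xb, hW.corner _ hWb, h⟩
        · exact ⟨b.1, hW.corner _ (Finset.mem_filter.1 hb).1, hbc⟩
      exact (hconv.image_rswap.ordConnected_sharedCols W).out hw (hW.corner (xa, yl) hWa)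
        ⟨hwc, hlt.1.le⟩
    rcases Finset.mem_union.1 (hX.subset₁ hc) with h | h <;> rw [Finset.mem_filter] at h
    · exact ⟨hlt, hV.subset h.1, hcol, fun x hx =>
        (mem_image_rswap_iff_of_ne (by omega) (by omega)).1 (hVS (hCS hx) c h.1)⟩
    · exact ⟨hlt, (hWrow c h.1 (by omega) (by omega)).1, hcol,
        (hWrow c h.1 (by omega) (by omega)).2⟩
  · rw [Finset.mem_filter] at hc
    exact ⟨⟨(hW.isChain.nelt_of_snd_lt hWa hc.1 hc.2).1, by simp only; omega⟩,
      (hWrow c hc.1 (by omega) (by omega)).1, hW.corner c hc.1,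
      (hWrow c hc.1 (by omega) (by omega)).2⟩

theorem exists_chain_through_long_row (hfin : M.Finite) (hcomp : RowsComparable M)
    (hadj : yl = ys + 1) (hexM : ∀ y, ExceptionalRow M y → y = ys ∨ y = yl)
    (hW : IsNEChainSet (rswap ys yl '' M) (rswap ys yl '' F) W) (hWb : (xb, ys) ∈ W)
    (hWa : (xa, yl) ∈ W) (hV : IsNEChainSet (rswap ys yl '' M) F V) (hVa : (xa, ys) ∈ V)
    (hVS : Row M ys ⊆ sharedCols (rswap ys yl '' M) V)
    (hX : IsExchange xb {c ∈ V | c.2 < ys} {c ∈ W | c.2 < ys} X₁ X₂) :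
    ∃ T, IsNEChainSet M F T ∧ T.card = X₂.card + {c ∈ V | yl < c.2}.card + 1 := by
  set C := sharedCols (rswap ys yl '' M) V
  have hCL : C ⊆ Row M yl := fun x hx => by
    have := hx _ hVa
    rw [mem_image_rswap, rswap_apply] at this
    exact (by simpa using this : (x, yl) ∈ M)
  have hVrow : ∀ c ∈ V, c.2 ≠ ys → c.2 ≠ yl → C ⊆ Row M c.2 := fun c hc h₁ h₂ x hx =>
    (mem_image_rswap_iff_of_ne h₁ h₂).1 (hx c hc)
  have hWcol : ∀ c ∈ W, c.1 ∈ C := fun c hc => hVS <| by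
    have := hW.corner c hc _ hWa
    rw [mem_image_rswap, rswap_apply] at this
    exact (by simpa using this : (c.1, ys) ∈ M)
  have hp : (xb, yl) ∈ F := by
    have := hW.subset hWb
    rw [mem_image_rswap, rswap_apply] at this
    simpa using this
  have hxab : xb < xa := (hW.isChain.nelt_of_snd_lt hWb hWa (by simp only; omega)).1
  refine exists_isNEChainSet_insert_union (C := C) hX.isChain₂
    (hV.isChain.mono (Finset.coe_subset.2 (Finset.filter_subset _ _)))
    ⟨hp, hWcol (xb, ys) hWb, hCL⟩ (fun c hc => ?_) fun c hc => ?_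
  · rcases hX.left₂ c hc with ⟨h, hcx⟩ | ⟨h, a, ha, hac⟩ <;> rw [Finset.mem_filter] at h
    · exact ⟨⟨hcx, by simp only; omega⟩, hV.subset h.1, hV.corner c h.1,
        hVrow c h.1 (by omega) (by omega)⟩
    refine ⟨⟨(hW.isChain.nelt_of_snd_lt h.1 hWb h.2).1, by simp only; omega⟩,
      mem_of_mem_image_rswap (hW.subset h.1) (by omega) (by omega), hWcol c h.1, ?_⟩
    rw [Finset.mem_filter] at ha
    have hc : ¬ExceptionalRow M c.2 := fun hex => by
      rcases hexM _ hex with h' | h' <;> omega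
    rcases row_subset_or_of_not_exceptional hfin hcomp hc hac (show c.2 < yl by omega)
      with hsub | hsub
    · exact (hVrow a ha.1 (by omega) (by omega)).trans hsub
    · exact hCL.trans hsub
  · rw [Finset.mem_filter] at hc
    exact ⟨⟨hxab.trans (hV.isChain.nelt_of_snd_lt hVa hc.1 (by simp only; omega)).1, hc.2⟩,
      hV.subset hc.1, hV.corner c hc.1, hVrow c hc.1 (by omega) (by omega)⟩

theorem card_le_card_filter_add_card (hadj : yl = ys + 1) {T Z : Finset Cell}
    (hZ : ∀ c ∈ T, c.2 = ys ∨ c.2 = yl → c ∈ Z) :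
    T.card ≤ {c ∈ T | c.2 < ys}.card + {c ∈ T | yl < c.2}.card + Z.card := by
  have hT : T ⊆ {c ∈ T | c.2 < ys} ∪ {c ∈ T | yl < c.2} ∪ Z := fun c hc => by
    simp only [Finset.mem_union, Finset.mem_filter]
    by_cases h : c.2 = ys ∨ c.2 = yl
    · exact .inr (hZ c hc h)
    push Not at h
    rcases lt_or_gt_of_ne h.1 with h' | h'
    · exact .inl (.inl ⟨hc, h'⟩)
    · exact .inl (.inr ⟨hc, by omega⟩)
  exact (Finset.card_le_card hT).trans ((Finset.card_union_le _ _).trans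
    (Nat.add_le_add_right (Finset.card_union_le _ _) _))

theorem card_le_of_coupled (hM : AlmostMoon M) (hadj : yl = ys + 1)
    (hsub : Row M ys ⊆ Row M yl) (hexM : ∀ y, ExceptionalRow M y → y = ys ∨ y = yl)
    (hinj : Set.InjOn Prod.snd F) {k : ℕ} (hk : ∀ T, IsNEChainSet M F T → T.card ≤ k)
    (hW : IsNEChainSet (rswap ys yl '' M) (rswap ys yl '' F) W) (hWk : k < W.card)
    (hWb : (xb, ys) ∈ W) (hWa : (xa, yl) ∈ W) (hV : IsNEChainSet (rswap ys yl '' M) F V)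
    (hVa : (xa, ys) ∈ V) (hVyl : ∀ d ∈ V, d.2 ≠ yl) : V.card ≤ k := by
  by_contra hVk
  push Not at hVk
  obtain ⟨v, hv, hvS⟩ : ∃ v ∈ V, v.1 ∉ Row M ys := by
    by_contra h
    push Not at h
    exact hVk.not_ge (hk V ((isNEChainSet_image_rswap_iff hsub fun c hc _ _ => .inl (h c hc)).1 hV))
  have hVS := row_subset_sharedCols_image_rswap hM.2.2.1 hV hv hvS
  obtain ⟨X₁, X₂, hX⟩ := exists_isExchange xb {c ∈ V | c.2 < ys} {c ∈ W | c.2 < ys}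
    (hV.isChain.mono (Finset.coe_subset.2 (Finset.filter_subset _ _)))
    (hW.isChain.mono (Finset.coe_subset.2 (Finset.filter_subset _ _)))
    (fun a ha b hb h => hinj (hV.subset (Finset.mem_filter.1 ha).1)
      (mem_of_mem_image_rswap (hW.subset (Finset.mem_filter.1 hb).1)
        (Finset.mem_filter.1 hb).2.ne (by have := (Finset.mem_filter.1 hb).2; omega)) h)
    (fun b hb => (hW.isChain.nelt_of_snd_lt (Finset.mem_filter.1 hb).1 hWb
      (Finset.mem_filter.1 hb).2).1)
  obtain ⟨T₁, hT₁, hT₁c⟩ := exists_chain_through_short_row hadj hM.2.1 hW hWb hWa hV hVa hVS hX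
  obtain ⟨T₂, hT₂, hT₂c⟩ :=
    exists_chain_through_long_row hM.1 hM.2.2.1 hadj hexM hW hWb hWa hV hVa hVS hX
  have hVc := card_le_card_filter_add_card hadj (T := V) (Z := {(xa, ys)}) fun c hc h =>
    Finset.mem_singleton.2 (hV.isChain.eq_of_snd_eq hc hVa (h.resolve_right (hVyl c hc)))
  have hWc := card_le_card_filter_add_card hadj (T := W) (Z := {(xb, ys), (xa, yl)})
    fun c hc h => h.elim (fun h => Finset.mem_insert.2 (.inl (hW.isChain.eq_of_snd_eq hc hWb h)))
      fun h => Finset.mem_insert_of_mem (Finset.mem_singleton.2 (hW.isChain.eq_of_snd_eq hc hWa h))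
  have := Finset.card_le_two (a := (xb, ys)) (b := (xa, yl))
  have := hk T₁ hT₁
  have := hk T₂ hT₂
  have := hX.card_le
  rw [Finset.card_singleton] at hVc
  omega

end Coupled

section Adjacent

variable {M F : Set Cell} {ys yl : ℤ}

theorem fswap_eq_self (hF : F ⊆ M) (hinj : Set.InjOn Prod.snd F) {xb : ℤ} (hb : (xb, yl) ∈ F)
    (hxb : xb ∈ Row M ys) : fswap (Row M ys) ys yl F = F := by
  conv_rhs => rw [← Set.image_id F]
  refine Set.image_congr fun c hc => ?_
  split_ifs with hcS
  · rfl
  refine rswap_of_ne (fun h => hcS ?_) fun h => hcS ?_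
  · exact (show (c.1, ys) ∈ M from h ▸ hF hc)
  · exact (Prod.ext_iff.1 (hinj hc hb h)).1 ▸ hxb

theorem coupled_cells_of_mem_image_rswap (hadj : yl = ys + 1) {W : Finset Cell}
    (hW : IsNEChainSet (rswap ys yl '' M) (rswap ys yl '' F) W) {xa xb : ℤ} (hb : (xb, ys) ∈ W)
    (ha : (xa, yl) ∈ W) : (xa, ys) ∈ F ∧ (xb, yl) ∈ F ∧ xb ∈ Row M ys ∧ xb < xa := by
  have hbF := hW.subset hb
  have haF := hW.subset ha
  have hcorner := hW.corner _ hb _ ha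
  rw [mem_image_rswap, rswap_apply] at hbF haF
  rw [mem_image_rswap, rswap_apply] at hcorner
  exact ⟨by simpa using haF, by simpa using hbF, (by simpa using hcorner : (xb, ys) ∈ M),
    (hW.isChain.nelt_of_snd_lt hb ha (by simp only; omega)).1⟩

theorem fswap_coupling (S : Set ℤ) (ys yl : ℤ) (F : Set Cell) :
    fswap S ys yl ((fun c => if c.1 ∈ S then rswap ys yl c else c) '' F) = rswap ys yl '' F := by
  rw [fswap, ← Set.image_comp]
  refine Set.image_congr fun c _ => ?_
  by_cases hc : c.1 ∈ S <;> simp [hc, rswap_apply]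

theorem cell_eq_of_snd_eq {c : Cell} {y : ℤ} (h : c.2 = y) : c = (c.1, y) := Prod.ext rfl h

theorem neSize_eq_or_of_chain_through_both_rows (hadj : yl = ys + 1)
    (hsub : Row M ys ⊆ Row M yl) (hF : F ⊆ M) (hfin : F.Finite) (hinj : Set.InjOn Prod.snd F)
    {T : Finset Cell} (hT : IsNEChainSet M F T) {xa xb : ℤ} (ha : (xa, ys) ∈ T)
    (hb : (xb, yl) ∈ T) :
    neSize M F = neSize (rswap ys yl '' M) (rswap ys yl '' F) ∨
      neSize M F = neSize (rswap ys yl '' M) (fswap (Row M ys) ys yl F) := by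
  have hab : xa < xb := (hT.isChain.nelt_of_snd_lt ha hb (by simp only; omega)).1
  have hle := neSize_le_neSize_image_rswap (P := rswap ys yl '' M) hadj (hfin.image _)
    fun W hW ⟨⟨c, hc, hcy⟩, d, hd, hdy⟩ => by
      rw [cell_eq_of_snd_eq hcy] at hc
      rw [cell_eq_of_snd_eq hdy] at hd
      obtain ⟨hdF, hcF, -, hcd⟩ := coupled_cells_of_mem_image_rswap hadj hW hc hd
      have h₁ := (Prod.ext_iff.1 (hinj hdF (hT.subset ha) rfl)).1
      have h₂ := (Prod.ext_iff.1 (hinj hcF (hT.subset hb) rfl)).1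
      simp only at h₁ h₂
      omega
  rw [image_rswap_image_rswap, image_rswap_image_rswap] at hle
  rcases hle.eq_or_lt with h | h
  · exact .inl h.symm
  · rw [fswap_eq_self hF hinj (hT.subset hb) (hT.corner _ hb _ ha)]
    exact .inr (neSize_image_rswap_eq_of_lt hadj hsub hfin h).symm

theorem neSize_eq_or_of_no_chain_through_both_rows (hM : AlmostMoon M) (hadj : yl = ys + 1)
    (hsub : Row M ys ⊆ Row M yl) (hexM : ∀ y, ExceptionalRow M y → y = ys ∨ y = yl)
    (hF : F ⊆ M) (hinj : Set.InjOn Prod.snd F)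
    (hmeet : ∀ T, IsNEChainSet M F T → ¬((∃ c ∈ T, c.2 = ys) ∧ ∃ d ∈ T, d.2 = yl)) :
    neSize M F = neSize (rswap ys yl '' M) (rswap ys yl '' F) ∨
      neSize M F = neSize (rswap ys yl '' M) (fswap (Row M ys) ys yl F) := by
  have hfin : F.Finite := hM.1.subset hF
  rcases (neSize_le_neSize_image_rswap hadj hfin hmeet).eq_or_lt with h | h
  · exact .inl h
  obtain ⟨W, hW, hWk, ⟨b, hb, hby⟩, a, ha, hay⟩ :=
    exists_isNEChainSet_meets_both_of_lt hadj hfin h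
  rw [cell_eq_of_snd_eq hby] at hb
  rw [cell_eq_of_snd_eq hay] at ha
  obtain ⟨haF, hbF, hbS, -⟩ := coupled_cells_of_mem_image_rswap hadj hW hb ha
  rw [fswap_eq_self hF hinj hbF hbS]
  refine .inr (le_antisymm (neSize_le_neSize_image_rswap_of_lt hadj hsub hfin h)
    (neSize_le_of_forall hfin fun V hV => ?_))
  by_cases hV' : (∃ d ∈ V, d.2 = yl) ∨ ∀ d ∈ V, d.2 ≠ ys
  · exact (hV.of_image_rswap hsub hV').card_le_neSize hfin
  push Not at hV'
  obtain ⟨hVyl, c, hc, hcy⟩ := hV'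
  have hca : c = (a.1, ys) := hinj (hV.subset hc) haF hcy
  exact card_le_of_coupled hM hadj hsub hexM hinj (fun T hT => hT.card_le_neSize hfin) hW hWk
    hb ha hV (hca ▸ hc) hVyl

theorem neSize_eq_or_of_long_row_above (hM : AlmostMoon M) (hadj : yl = ys + 1)
    (hsub : Row M ys ⊆ Row M yl) (hexM : ∀ y, ExceptionalRow M y → y = ys ∨ y = yl)
    (hF : F ⊆ M) (hinj : Set.InjOn Prod.snd F) :
    neSize M F = neSize (rswap ys yl '' M) (rswap ys yl '' F) ∨
      neSize M F = neSize (rswap ys yl '' M) (fswap (Row M ys) ys yl F) := by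
  by_cases hmeet : ∃ T, IsNEChainSet M F T ∧ (∃ c ∈ T, c.2 = ys) ∧ ∃ d ∈ T, d.2 = yl
  · obtain ⟨T, hT, ⟨a, ha, hay⟩, b, hb, hby⟩ := hmeet
    rw [cell_eq_of_snd_eq hay] at ha
    rw [cell_eq_of_snd_eq hby] at hb
    exact neSize_eq_or_of_chain_through_both_rows hadj hsub hF (hM.1.subset hF) hinj hT ha hb
  · exact neSize_eq_or_of_no_chain_through_both_rows hM hadj hsub hexM hF hinj
      fun T hT h => hmeet ⟨T, hT, h⟩

end Adjacent

section Rotation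

open scoped Pointwise

variable {P H : Set Cell} {ys yl : ℤ}

theorem row_neg (P : Set Cell) (y : ℤ) : Row (-P) y = -Row P (-y) := by
  ext x
  change (x, y) ∈ -P ↔ (-x, -y) ∈ P
  rw [Set.mem_neg]
  rfl

theorem rowLen_neg (P : Set Cell) (y : ℤ) : rowLen (-P) y = rowLen P (-y) := by
  rw [rowLen, row_neg, Set.ncard_neg, rowLen]

theorem exceptionalRow_neg {y : ℤ} : ExceptionalRow (-P) y ↔ ExceptionalRow P (-y) := by
  simp only [ExceptionalRow, rowLen_neg]
  constructor
  · rintro ⟨⟨a, ha, h⟩, b, hb, h'⟩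
    exact ⟨⟨-b, by omega, h'⟩, -a, by omega, h⟩
  · rintro ⟨⟨a, ha, h⟩, b, hb, h'⟩
    exact ⟨⟨-b, by omega, by rwa [neg_neg]⟩, -a, by omega, by rwa [neg_neg]⟩

theorem AlmostMoon.neg (h : AlmostMoon P) : AlmostMoon (-P) := by
  refine ⟨h.1.neg, fun y x₁ x₂ x h₁ h₂ hx₁ hx₂ => ?_, fun y₁ y₂ => ?_, fun y₁ y₂ h₁ h₂ => ?_⟩
  · rw [row_neg, Set.mem_neg] at h₁ h₂ ⊢
    exact h.2.1 _ _ _ _ h₂ h₁ (neg_le_neg hx₂) (neg_le_neg hx₁)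
  · simpa only [row_neg, Set.neg_subset_neg] using h.2.2.1 (-y₁) (-y₂)
  · rw [exceptionalRow_neg] at h₁ h₂
    exact neg_injective (h.2.2.2 _ _ h₁ h₂)

theorem Set.InjOn.neg_snd (h : Set.InjOn Prod.snd H) : Set.InjOn Prod.snd (-H) :=
  fun c hc d hd hcd => neg_injective (h hc hd (by simp [hcd]))

theorem IsNEChainSet.neg {T : Finset Cell} (h : IsNEChainSet P H T) :
    IsNEChainSet (-P) (-H) (-T) := by
  refine ⟨?_, ?_, fun c hc d hd => ?_⟩
  · rw [Finset.coe_neg]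
    exact Set.neg_subset_neg.2 h.subset
  · rw [Finset.coe_neg, ← Set.image_neg_eq_neg]
    exact h.isChain.symm.image_of_map_rel _ _ _ fun c d hcd => ⟨neg_lt_neg hcd.1, neg_lt_neg hcd.2⟩
  · rw [← Finset.mem_coe, Finset.coe_neg, Set.mem_neg] at hc hd
    exact Set.mem_neg.2 (h.corner (-c) hc (-d) hd)

theorem neSize_neg (P : Set Cell) (hH : H.Finite) : neSize (-P) (-H) = neSize P H := by
  refine le_antisymm (neSize_le_of_forall hH.neg fun T hT => ?_)
    (neSize_le_of_forall hH fun T hT => ?_)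
  · have := hT.neg.card_le_neSize (by rwa [neg_neg])
    rwa [Finset.card_neg, neg_neg, neg_neg] at this
  · simpa using hT.neg.card_le_neSize hH.neg

theorem neg_rswap (c : Cell) : -rswap ys yl c = rswap (-ys) (-yl) (-c) := by
  simp only [rswap_apply, Prod.fst_neg, Prod.snd_neg, Prod.neg_mk, Equiv.swap_apply_def,
    neg_inj]
  split_ifs <;> simp_all

theorem neg_image_rswap (X : Set Cell) : -(rswap ys yl '' X) = rswap (-ys) (-yl) '' (-X) := by
  rw [← Set.image_neg_eq_neg, ← Set.image_neg_eq_neg, ← Set.image_comp, ← Set.image_comp]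
  exact Set.image_congr fun c _ => neg_rswap c

theorem neg_fswap (S : Set ℤ) (X : Set Cell) :
    -fswap S ys yl X = fswap (-S) (-ys) (-yl) (-X) := by
  rw [fswap, fswap, ← Set.image_neg_eq_neg (s := X), ← Set.image_comp,
    ← Set.image_neg_eq_neg (s := (fun c => if c.1 ∈ S then c else rswap ys yl c) '' X),
    ← Set.image_comp]
  refine Set.image_congr fun c _ => ?_
  by_cases hc : c.1 ∈ S
  · simp [hc]
  · simp [hc, neg_rswap]

theorem neSize_eq_or_of_long_row_below {M F : Set Cell} (hM : AlmostMoon M) (hadj : ys = yl + 1)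
    (hsub : Row M ys ⊆ Row M yl) (hexM : ∀ y, ExceptionalRow M y → y = ys ∨ y = yl)
    (hF : F ⊆ M) (hinj : Set.InjOn Prod.snd F) :
    neSize M F = neSize (rswap ys yl '' M) (rswap ys yl '' F) ∨
      neSize M F = neSize (rswap ys yl '' M) (fswap (Row M ys) ys yl F) := by
  have hfin : F.Finite := hM.1.subset hF
  -- the half turn `c ↦ -c` puts the long row above the short one
  have hexM' : ∀ y, ExceptionalRow (-M) y → y = -ys ∨ y = -yl := fun y hy => by
    rcases hexM _ (exceptionalRow_neg.1 hy) with h | h <;> omega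
  have := neSize_eq_or_of_long_row_above hM.neg (by omega : -yl = -ys + 1)
    (by simpa [row_neg] using hsub) hexM' (Set.neg_subset_neg.2 hF) hinj.neg_snd
  have hfin' : (fswap (Row M ys) ys yl F).Finite := hfin.image _
  rwa [← neg_image_rswap, ← neg_image_rswap, row_neg, neg_neg, ← neg_fswap, neSize_neg _ hfin,
    neSize_neg _ (hfin.image _), neSize_neg _ hfin'] at this

end Rotation

theorem coupling_lemma_general (M N : Set (ℤ × ℤ)) (ys yl : ℤ)
    (hM : AlmostMoon M)
    (hadj : yl = ys + 1 ∨ ys = yl + 1)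
    (hsub : Row M ys ⊆ Row M yl)
    (hNdef : N = rswap ys yl '' M)
    (hexM : ∀ y, ExceptionalRow M y → y = ys ∨ y = yl)
    (F : Set (ℤ × ℤ)) (hF : F ⊆ M) (hrow : ∀ y, rowLen F y ≤ 1)
    (F' G G' : Set (ℤ × ℤ))
    (hF' : F' = (fun c => if c.1 ∈ Row M ys then rswap ys yl c else c) '' F)
    (hG : G = fswap (Row M ys) ys yl F')
    (hG' : G' = fswap (Row M ys) ys yl F) :
    neSize M F = neSize N G ∨ neSize M F = neSize N G' := by
  have hinj := injOn_snd_of_rowLen_le_one (hM.1.subset hF) hrow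
  rw [hG, hF', fswap_coupling, hG', hNdef]
  rcases hadj with hadj | hadj
  · exact neSize_eq_or_of_long_row_above hM hadj hsub hexM hF hinj
  · exact neSize_eq_or_of_long_row_below hM hadj hsub hexM hF hinj

/-- Lemma 4.3 (Lemma \ref{lemma3-1}) of the paper: for a filling `F` of `M` with at most
one 1 per row, its coupling filling `F'`, and the corresponding fillings
`G = f_{M,N}(F')`, `G' = f_{M,N}(F)` of `N`, one has `ne(F) = ne(G)` or `ne(F) = ne(G')`. -/
theorem coupling_lemma (M N : Set (ℤ × ℤ)) (ys yl : ℤ)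
    (hM : AlmostMoon M) (hN : AlmostMoon N)
    (hadj : yl = ys + 1 ∨ ys = yl + 1)
    (hsub : Row M ys ⊆ Row M yl) (hlt : rowLen M ys < rowLen M yl)
    (hNdef : N = rswap ys yl '' M)
    (hexM : ∀ y, ExceptionalRow M y → y = ys ∨ y = yl)
    (hexN : ∀ y, ExceptionalRow N y → y = ys ∨ y = yl)
    (F : Set (ℤ × ℤ)) (hF : F ⊆ M) (hrow : ∀ y, rowLen F y ≤ 1)
    (F' G G' : Set (ℤ × ℤ))
    (hF' : F' = (fun c => if c.1 ∈ Row M ys then rswap ys yl c else c) '' F)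
    (hG : G = fswap (Row M ys) ys yl F')
    (hG' : G' = fswap (Row M ys) ys yl F) :
    neSize M F = neSize N G ∨ neSize M F = neSize N G' :=
  coupling_lemma_general M N ys yl hM hadj hsub hNdef hexM F hF hrow F' G G' hF' hG hG'
end

section
/- There exist two polyominoes M1 and M2 with interval rows and pairwise comparable rows, related by an interchange of two adjacent rows but each having two exceptional rows, and a column-sum vector c = (1,1,1,1,1) with row sums r = (1,1,1,1,1), such that the generating polynomials of ne over F(M1,r,c) and F(M2,r,c) differ: namely ∑ x^{ne} equals x + 37x^2 + 31x^3 + 3x^4 for M1 and x + 36x^2 + 32x^3 + 3x^4 for M2. -/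
open Set
open scoped Classical

/-- A 01-filling with exactly one 1 in every (nonempty) row and every (nonempty) column. -/
noncomputable def PermFilling (P F : Set (ℤ × ℤ)) : Prop :=
  F ⊆ P ∧ (∀ y, Row P y ≠ ∅ → rowLen F y = 1) ∧ ∀ x, Col P x ≠ ∅ → colLen F x = 1

/-!
Both polyominoes are obtained from the `5 × 5` square by removing the first cell of two rows,
and they still meet every row and column of the square. Hence their permutation fillings are
exactly the permutation matrices of those `σ ∈ S₅` whose cells lie in the polyomino, and the
largest northeast chain of a finite filling is the largest set of its cells which pairwise
form northeast pairs whose spanning rectangle lies in the polyomino. Both descriptions are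
finite, so the two distributions of `ne` are obtained by evaluating it on the 120 permutations.
-/

/-- `s` is the set of cells of a northeast chain in the sense of `IsNEChain`, without a chosen
enumeration. -/
def IsNEChainSet_s17 (P s : Finset (ℤ × ℤ)) : Prop :=
  ∀ a ∈ s, ∀ b ∈ s, (a.1 < b.1 ↔ a.2 < b.2) ∧ (a.1, b.2) ∈ P

instance (P : Finset (ℤ × ℤ)) : DecidablePred (IsNEChainSet_s17 P) := fun s => by
  unfold IsNEChainSet_s17; infer_instance

def maxNEChainCard (P F : Finset (ℤ × ℤ)) : ℕ :=
  (F.powerset.filter (IsNEChainSet_s17 P)).sup Finset.card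

lemma IsNEChain.injective {P F : Set (ℤ × ℤ)} {k : ℕ} {g : Fin k → ℤ × ℤ}
    (h : IsNEChain P F k g) : Function.Injective g :=
  fun _ _ hrs => h.2.1.injective (congrArg Prod.fst hrs)

lemma IsNEChain.isNEChainSet_image {P : Finset (ℤ × ℤ)} {F : Set (ℤ × ℤ)} {k : ℕ}
    {g : Fin k → ℤ × ℤ} (h : IsNEChain (↑P) F k g) : IsNEChainSet_s17 P (Finset.univ.image g) := by
  obtain ⟨-, h₁, h₂, hP⟩ := h
  simp only [IsNEChainSet_s17, Finset.mem_image, Finset.mem_univ, true_and, forall_exists_index,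
    forall_apply_eq_imp_iff]
  exact fun r s => ⟨h₁.lt_iff_lt.trans h₂.lt_iff_lt.symm, hP r s⟩

lemma IsNEChainSet_s17.exists_isNEChain {P s : Finset (ℤ × ℤ)} (h : IsNEChainSet_s17 P s) :
    ∃ g : Fin s.card → ℤ × ℤ, IsNEChain ↑P ↑s s.card g := by
  -- Listing `s` in lexicographic order lists it by abscissa, as a chain has no two cells
  -- in the same column.
  let e := (s.map toLex.toEmbedding).orderEmbOfFin (Finset.card_map _)
  have mem (r) : ofLex (e r) ∈ s := by simpa using (s.map toLex.toEmbedding).orderEmbOfFin_mem _ r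
  have fst_mono : StrictMono fun r => (ofLex (e r)).1 := by
    intro r t hrt
    rcases Prod.Lex.toLex_lt_toLex.mp (e.strictMono hrt) with hlt | ⟨heq, hlt⟩
    · exact hlt
    · have := (h _ (mem r) _ (mem t)).1.mpr hlt
      omega
  exact ⟨fun r => ofLex (e r), mem, fst_mono,
    fun r t hrt => (h _ (mem r) _ (mem t)).1.mp (fst_mono hrt),
    fun r t => (h _ (mem r) _ (mem t)).2⟩

lemma neSize_coe (P F : Finset (ℤ × ℤ)) : neSize ↑P ↑F = maxNEChainCard P F := by
  set T := F.powerset.filter (IsNEChainSet_s17 P)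
  have hT : T.Nonempty := ⟨∅, by simp [T, IsNEChainSet_s17]⟩
  have sizes : {k | ∃ g, IsNEChain ↑P ↑F k g} = Finset.card '' (T : Set (Finset (ℤ × ℤ))) := by
    ext k
    constructor
    · rintro ⟨g, hg⟩
      refine ⟨Finset.univ.image g, ?_, ?_⟩
      · simp only [T, Finset.coe_filter, Finset.mem_powerset, Set.mem_ofPred_eq]
        refine ⟨fun c hc => ?_, hg.isNEChainSet_image⟩
        obtain ⟨r, -, rfl⟩ := Finset.mem_image.mp hc
        exact hg.1 r
      · rw [Finset.card_image_of_injective _ hg.injective, Finset.card_univ, Fintype.card_fin]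
    · rintro ⟨s, hs, rfl⟩
      obtain ⟨hsF, hs⟩ := Finset.mem_filter.mp hs
      obtain ⟨g, hg⟩ := hs.exists_isNEChain
      exact ⟨g, fun r => Finset.mem_powerset.mp hsF (hg.1 r), hg.2⟩
  rw [neSize, sizes, ← Finset.sup'_eq_csSup_image T hT, Finset.sup'_eq_sup]
  rfl

section PermutationFillings

variable {n : ℕ}

def coord (i : Fin n) : ℤ := (i : ℕ) + 1

lemma coord_injective : Function.Injective (coord (n := n)) :=
  fun i j h => Fin.ext (by simpa [coord] using h)

noncomputable def box (n : ℕ) : Finset (ℤ × ℤ) := Finset.Icc 1 (n : ℤ) ×ˢ Finset.Icc 1 (n : ℤ)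

lemma exists_coord_of_mem_box {c : ℤ × ℤ} (h : c ∈ box n) :
    ∃ i j : Fin n, c = (coord i, coord j) := by
  simp only [box, Finset.mem_product, Finset.mem_Icc] at h
  exact ⟨⟨(c.1 - 1).toNat, by omega⟩, ⟨(c.2 - 1).toNat, by omega⟩,
    Prod.ext (by simp [coord]; omega) (by simp [coord]; omega)⟩

/-- The filling by the permutation matrix of `σ`. -/
def permCells (σ : Equiv.Perm (Fin n)) : Finset (ℤ × ℤ) :=
  Finset.univ.image fun i => (coord (σ i), coord i)

lemma mem_permCells {σ : Equiv.Perm (Fin n)} {x y : ℤ} :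
    (x, y) ∈ permCells σ ↔ ∃ i, coord (σ i) = x ∧ coord i = y := by
  simp [permCells]

lemma row_permCells (σ : Equiv.Perm (Fin n)) (i : Fin n) :
    Row ↑(permCells σ) (coord i) = {coord (σ i)} := by
  ext x
  simp only [Row, Set.mem_ofPred_eq, Finset.mem_coe, mem_permCells, coord_injective.eq_iff,
    Set.mem_singleton_iff]
  exact ⟨fun ⟨j, hj, hji⟩ => hji ▸ hj.symm, fun hx => ⟨i, hx.symm, rfl⟩⟩

lemma col_permCells (σ : Equiv.Perm (Fin n)) (i : Fin n) :
    Col ↑(permCells σ) (coord (σ i)) = {coord i} := by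
  ext y
  simp only [Col, Set.mem_ofPred_eq, Finset.mem_coe, mem_permCells, coord_injective.eq_iff,
    σ.injective.eq_iff, Set.mem_singleton_iff]
  exact ⟨fun ⟨j, hji, hj⟩ => hji ▸ hj.symm, fun hy => ⟨i, rfl, hy.symm⟩⟩

lemma permCells_injective : Function.Injective (permCells (n := n)) := by
  intro σ τ h
  ext i
  have := row_permCells σ i
  rw [h, row_permCells, Set.singleton_eq_singleton_iff] at this
  exact congrArg Fin.val (coord_injective this).symm

variable {P : Finset (ℤ × ℤ)}

lemma permFilling_permCells (hP : P ⊆ box n) {σ : Equiv.Perm (Fin n)} (hσ : permCells σ ⊆ P) :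
    PermFilling ↑P ↑(permCells σ) := by
  refine ⟨Finset.coe_subset.mpr hσ, fun y hy => ?_, fun x hx => ?_⟩
  · obtain ⟨x, hx⟩ := Set.nonempty_iff_ne_empty.mpr hy
    obtain ⟨_, i, hxy⟩ := exists_coord_of_mem_box (hP hx)
    rw [(Prod.mk.inj hxy).2, rowLen, row_permCells, Set.ncard_singleton]
  · obtain ⟨y, hy⟩ := Set.nonempty_iff_ne_empty.mpr hx
    obtain ⟨j, _, hxy⟩ := exists_coord_of_mem_box (hP hy)
    rw [(Prod.mk.inj hxy).1, ← σ.apply_symm_apply j, colLen, col_permCells, Set.ncard_singleton]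

lemma exists_eq_permCells_of_permFilling (hP : P ⊆ box n)
    (hrow : ∀ i : Fin n, ∃ j : Fin n, (coord j, coord i) ∈ P)
    (hcol : ∀ j : Fin n, ∃ i : Fin n, (coord j, coord i) ∈ P)
    {F : Set (ℤ × ℤ)} (hF : PermFilling ↑P F) : ∃ σ : Equiv.Perm (Fin n), F = ↑(permCells σ) := by
  obtain ⟨hFP, hrows, hcols⟩ := hF
  have hFbox (c) (hc : c ∈ F) : ∃ i j : Fin n, c = (coord i, coord j) :=
    exists_coord_of_mem_box (hP (hFP hc))
  have row_eq (i : Fin n) : ∃ j : Fin n, Row F (coord i) = {coord j} := by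
    obtain ⟨j, hj⟩ := hrow i
    obtain ⟨x, hx⟩ := Set.ncard_eq_one.mp (hrows _ (Set.nonempty_iff_ne_empty.mp ⟨_, hj⟩))
    obtain ⟨j', _, hj'⟩ := hFbox (x, coord i) (show x ∈ Row F (coord i) by simp [hx])
    exact ⟨j', by rw [hx, (Prod.mk.inj hj').1]⟩
  choose f hf using row_eq
  have hmem (i : Fin n) : (coord (f i), coord i) ∈ F :=
    show coord (f i) ∈ Row F (coord i) by rw [hf]; rfl
  have f_injective : Function.Injective f := by
    intro i i' h
    obtain ⟨k, hk⟩ := hcol (f i)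
    obtain ⟨y, hy⟩ := Set.ncard_eq_one.mp (hcols _ (Set.nonempty_iff_ne_empty.mp ⟨_, hk⟩))
    have hi : coord i ∈ Col F (coord (f i)) := hmem i
    have hi' : coord i' ∈ Col F (coord (f i)) := h ▸ hmem i'
    rw [hy] at hi hi'
    exact coord_injective (hi.trans hi'.symm)
  refine ⟨Equiv.ofBijective f f_injective.bijective_of_finite, Set.ext fun ⟨x, y⟩ => ?_⟩
  rw [Finset.mem_coe, mem_permCells]
  constructor
  · intro hc
    obtain ⟨j, i, hji⟩ := hFbox _ hc
    obtain ⟨rfl, rfl⟩ := Prod.mk.inj hji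
    have : coord j ∈ Row F (coord i) := hc
    rw [hf] at this
    exact ⟨i, this.symm, rfl⟩
  · rintro ⟨i, rfl, rfl⟩
    exact hmem i

def admissiblePerms (n : ℕ) (P : Finset (ℤ × ℤ)) : Finset (Equiv.Perm (Fin n)) :=
  Finset.univ.filter fun σ => permCells σ ⊆ P

/-- Its counts are the coefficients of the generating polynomial of `ne` over the permutation
fillings of `P` (`ncard_permFilling_neSize_eq`). -/
def neDistribution (n : ℕ) (P : Finset (ℤ × ℤ)) : Multiset ℕ :=
  (admissiblePerms n P).val.map fun σ => maxNEChainCard P (permCells σ)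

lemma ncard_permFilling_neSize_eq (hP : P ⊆ box n)
    (hrow : ∀ i : Fin n, ∃ j : Fin n, (coord j, coord i) ∈ P)
    (hcol : ∀ j : Fin n, ∃ i : Fin n, (coord j, coord i) ∈ P) (k : ℕ) :
    {F | PermFilling ↑P F ∧ neSize ↑P F = k}.ncard = (neDistribution n P).count k := by
  have fillings : {F | PermFilling ↑P F ∧ neSize ↑P F = k} =
      (fun σ => (↑(permCells σ) : Set (ℤ × ℤ))) ''
        ((admissiblePerms n P).filter fun σ => k = maxNEChainCard P (permCells σ) :
          Set (Equiv.Perm (Fin n))) := by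
    ext F
    simp only [Set.mem_ofPred_eq, Set.mem_image, Finset.coe_filter, admissiblePerms,
      Finset.mem_filter, Finset.mem_univ, true_and]
    constructor
    · rintro ⟨hF, rfl⟩
      obtain ⟨σ, rfl⟩ := exists_eq_permCells_of_permFilling hP hrow hcol hF
      exact ⟨σ, ⟨Finset.coe_subset.mp hF.1, neSize_coe P _⟩, rfl⟩
    · rintro ⟨σ, ⟨hσ, hk⟩, rfl⟩
      exact ⟨permFilling_permCells hP hσ, (neSize_coe P _).trans hk.symm⟩
  rw [fillings,
    Set.ncard_image_of_injective _ fun _ _ h => permCells_injective (Finset.coe_injective h),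
    Set.ncard_coe_finset, neDistribution, Multiset.count_map, Finset.card_def, Finset.filter_val]

end PermutationFillings

/-- `notchedSquare {3, 4}` is the paper's `M₁`, rows numbered from the bottom, and
`notchedSquare {2, 4}` is `M₁` with a long row moved between its two short ones. -/
noncomputable def notchedSquare (S : Finset ℤ) : Finset (ℤ × ℤ) :=
  (box 5).filter fun c => c.2 ∈ S → 2 ≤ c.1

/-- Empty rows are encoded as `[6, 5]`. -/
def notchedRowStart (S : Finset ℤ) (y : ℤ) : ℤ :=
  if 1 ≤ y ∧ y ≤ 5 then (if y ∈ S then 2 else 1) else 6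

section NotchedSquare

variable (S : Finset ℤ)

lemma notchedSquare_subset_box : notchedSquare S ⊆ box 5 :=
  Finset.filter_subset _ _

lemma row_notchedSquare (y : ℤ) : Row ↑(notchedSquare S) y = Set.Icc (notchedRowStart S y) 5 := by
  ext x
  simp only [Row, Set.mem_ofPred_eq, Finset.mem_coe, notchedSquare, box, Finset.mem_filter,
    Finset.mem_product, Finset.mem_Icc, Set.mem_Icc, notchedRowStart]
  split_ifs <;> simp_all <;> omega

lemma rowLen_notchedSquare (y : ℤ) :
    rowLen ↑(notchedSquare S) y = (6 - notchedRowStart S y).toNat := by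
  rw [rowLen, row_notchedSquare, ← Finset.coe_Icc, Set.ncard_coe_finset, Int.card_Icc]
  ring_nf

lemma rowConvex_notchedSquare : RowConvex ↑(notchedSquare S) := by
  intro y x₁ x₂ x h₁ h₂ hx₁ hx₂
  rw [row_notchedSquare] at *
  exact ⟨h₁.1.trans hx₁, hx₂.trans h₂.2⟩

lemma rowsComparable_notchedSquare : RowsComparable ↑(notchedSquare S) := by
  intro y₁ y₂
  rw [row_notchedSquare, row_notchedSquare]
  rcases le_total (notchedRowStart S y₁) (notchedRowStart S y₂) with h | h
  · exact Or.inr (Set.Icc_subset_Icc_left h)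
  · exact Or.inl (Set.Icc_subset_Icc_left h)

variable {S} in
lemma exceptionalRow_notchedSquare {y : ℤ} (hy : y ∈ S) (hbelow : ∃ a ∈ Finset.Ico 1 y, a ∉ S)
    (habove : ∃ b ∈ Finset.Ioc y 5, b ∉ S) : ExceptionalRow ↑(notchedSquare S) y := by
  obtain ⟨a, ha, haS⟩ := hbelow
  obtain ⟨b, hb, hbS⟩ := habove
  rw [Finset.mem_Ico] at ha
  rw [Finset.mem_Ioc] at hb
  refine ⟨⟨b, hb.1, ?_⟩, ⟨a, ha.2, ?_⟩⟩ <;>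
    simp only [rowLen_notchedSquare, notchedRowStart, hy, haS, hbS, if_true, if_false] <;>
    split_ifs <;> omega

end NotchedSquare

lemma notchedSquare_swap :
    notchedSquare {2, 4} = (notchedSquare {3, 4}).image (rswap 2 (2 + 1)) := by
  decide

lemma neDistribution_notchedSquare_34 :
    neDistribution 5 (notchedSquare {3, 4}) = Multiset.replicate 1 1 +
      Multiset.replicate 37 2 + Multiset.replicate 31 3 + Multiset.replicate 3 4 := by
  decide +kernel

lemma neDistribution_notchedSquare_24 :
    neDistribution 5 (notchedSquare {2, 4}) = Multiset.replicate 1 1 +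
      Multiset.replicate 36 2 + Multiset.replicate 32 3 + Multiset.replicate 3 4 := by
  decide +kernel

/-- There exist two polyominoes with interval rows and pairwise comparable rows, related
by an interchange of two adjacent rows but each having two exceptional rows, whose
generating polynomials of `ne` over permutation fillings are
`x + 37x² + 31x³ + 3x⁴` and `x + 36x² + 32x³ + 3x⁴` respectively. -/
theorem general_polyomino_counterexample :
    ∃ M₁ M₂ : Set (ℤ × ℤ),
      M₁.Finite ∧ M₂.Finite ∧
      RowConvex M₁ ∧ RowsComparable M₁ ∧ RowConvex M₂ ∧ RowsComparable M₂ ∧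
      (∃ y : ℤ, M₂ = rswap y (y + 1) '' M₁) ∧
      (∃ y₁ y₂ : ℤ, y₁ ≠ y₂ ∧ ExceptionalRow M₁ y₁ ∧ ExceptionalRow M₁ y₂) ∧
      (∃ y₁ y₂ : ℤ, y₁ ≠ y₂ ∧ ExceptionalRow M₂ y₁ ∧ ExceptionalRow M₂ y₂) ∧
      (∀ k : ℕ, {F : Set (ℤ × ℤ) | PermFilling M₁ F ∧ neSize M₁ F = k}.ncard =
        if k = 1 then 1 else if k = 2 then 37 else if k = 3 then 31 else
          if k = 4 then 3 else 0) ∧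
      (∀ k : ℕ, {F : Set (ℤ × ℤ) | PermFilling M₂ F ∧ neSize M₂ F = k}.ncard =
        if k = 1 then 1 else if k = 2 then 36 else if k = 3 then 32 else
          if k = 4 then 3 else 0) := by
  refine ⟨notchedSquare {3, 4}, notchedSquare {2, 4}, Finset.finite_toSet _,
    Finset.finite_toSet _, rowConvex_notchedSquare _, rowsComparable_notchedSquare _,
    rowConvex_notchedSquare _, rowsComparable_notchedSquare _,
    ⟨2, by rw [← Finset.coe_image, notchedSquare_swap]⟩,
    ⟨3, 4, by decide, exceptionalRow_notchedSquare (by decide) (by decide) (by decide),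
      exceptionalRow_notchedSquare (by decide) (by decide) (by decide)⟩,
    ⟨2, 4, by decide, exceptionalRow_notchedSquare (by decide) (by decide) (by decide),
      exceptionalRow_notchedSquare (by decide) (by decide) (by decide)⟩, fun k => ?_, fun k => ?_⟩
  · rw [ncard_permFilling_neSize_eq (notchedSquare_subset_box _) (by decide) (by decide) k,
      neDistribution_notchedSquare_34]
    simp only [Multiset.count_add, Multiset.count_replicate]
    split_ifs <;> omega
  · rw [ncard_permFilling_neSize_eq (notchedSquare_subset_box _) (by decide) (by decide) k,
      neDistribution_notchedSquare_24]
    simp only [Multiset.count_add, Multiset.count_replicate]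
    split_ifs <;> omega
end

section
/- For the 4×4-type moon polyomino M with rows (top to bottom) of x-supports [1,2], [1,2], [1,3], [1,3] shown in Figure 7 of the paper, with row sums r = (1,1,1,1) and column sums c = (2,1,1), the joint distribution of (ne, se) over F(M,r,c) is not symmetric: the number of fillings with (ne,se) = (1,3) is 1 while the number with (ne,se) = (3,1) is 0. -/
open Set
open scoped Classical

/-- `g` is a southeast chain of size `k` of the filling `F` in the polyomino `P`. -/
def IsSEChain (P F : Set (ℤ × ℤ)) (k : ℕ) (g : Fin k → ℤ × ℤ) : Prop :=
  (∀ r, g r ∈ F) ∧ StrictMono (fun r => (g r).1) ∧ StrictAnti (fun r => (g r).2) ∧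
    ∀ r s, ((g r).1, (g s).2) ∈ P

/-- The size of the largest southeast chain of the filling `F` in the polyomino `P`. -/
noncomputable def seSize (P F : Set (ℤ × ℤ)) : ℕ :=
  sSup {k | ∃ g : Fin k → ℤ × ℤ, IsSEChain P F k g}

/-- The moon polyomino of Figure 7: columns 1, 2 of length 4, column 3 of length 3. -/
def MFig7 : Set (ℤ × ℤ) :=
  {p | (1 ≤ p.1 ∧ p.1 ≤ 2 ∧ 1 ≤ p.2 ∧ p.2 ≤ 4) ∨ (p.1 = 3 ∧ 1 ≤ p.2 ∧ p.2 ≤ 3)}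

/-!
Every chain in `MFig7` has at most three cells, one per column. A southeast chain of size 3
must be `(1,3), (2,2), (3,1)`: its grid reaches the short column 3, so its first cell lies in
row at most 3. The unit row sums then push the second cell of column 1 into row 4, so only one
filling has `se = 3`, and it has `ne = 1`. A northeast chain of size 3 must be
`(1,1), (2,2), (3,3)`; column 1 then has a cell outside rows 1 and 2 (row 2 is taken by
`(2,2)`), and that cell and `(2,2)` form a southeast chain, so `se ≥ 2`.
-/

section Chains

variable {P F : Set (ℤ × ℤ)} {k n : ℕ} {g : Fin k → ℤ × ℤ}

theorem length_le_of_strictMono_mem_Icc {f : Fin k → ℤ} (hf : StrictMono f) {a b : ℤ}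
    (hab : ∀ r, f r ∈ Icc a b) : k ≤ (b + 1 - a).toNat := by
  simpa [Int.card_Icc] using Finset.card_le_card_of_injOn f
    (s := Finset.univ) (t := Finset.Icc a b) (fun r _ => by simpa using hab r)
    hf.injective.injOn

theorem IsNEChain.length_le {a b : ℤ} (hg : IsNEChain P F k g)
    (hP : ∀ c ∈ P, c.1 ∈ Icc a b) : k ≤ (b + 1 - a).toNat :=
  length_le_of_strictMono_mem_Icc hg.2.1 fun r => hP _ (hg.2.2.2 r r)

theorem IsSEChain.length_le {a b : ℤ} (hg : IsSEChain P F k g)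
    (hP : ∀ c ∈ P, c.1 ∈ Icc a b) : k ≤ (b + 1 - a).toNat :=
  length_le_of_strictMono_mem_Icc hg.2.1 fun r => hP _ (hg.2.2.2 r r)

theorem isNEChain_zero : IsNEChain P F 0 Fin.elim0 :=
  ⟨fun i => i.elim0, fun i => i.elim0, fun i => i.elim0, fun i => i.elim0⟩

theorem isSEChain_zero : IsSEChain P F 0 Fin.elim0 :=
  ⟨fun i => i.elim0, fun i => i.elim0, fun i => i.elim0, fun i => i.elim0⟩

theorem bddAbove_neChainSizes_s18 {a b : ℤ} (hP : ∀ c ∈ P, c.1 ∈ Icc a b) :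
    BddAbove {k | ∃ g : Fin k → ℤ × ℤ, IsNEChain P F k g} :=
  ⟨_, fun _ ⟨_, hg⟩ => hg.length_le hP⟩

theorem bddAbove_seChainSizes {a b : ℤ} (hP : ∀ c ∈ P, c.1 ∈ Icc a b) :
    BddAbove {k | ∃ g : Fin k → ℤ × ℤ, IsSEChain P F k g} :=
  ⟨_, fun _ ⟨_, hg⟩ => hg.length_le hP⟩

theorem le_neSize (hbdd : BddAbove {k | ∃ g : Fin k → ℤ × ℤ, IsNEChain P F k g})
    (hg : IsNEChain P F k g) : k ≤ neSize P F :=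
  le_csSup hbdd ⟨g, hg⟩

theorem le_seSize (hbdd : BddAbove {k | ∃ g : Fin k → ℤ × ℤ, IsSEChain P F k g})
    (hg : IsSEChain P F k g) : k ≤ seSize P F :=
  le_csSup hbdd ⟨g, hg⟩

theorem neSize_le (h : ∀ k g, IsNEChain P F k g → k ≤ n) : neSize P F ≤ n := by
  refine csSup_le ⟨0, _, isNEChain_zero⟩ ?_
  rintro k ⟨g, hg⟩
  exact h k g hg

theorem seSize_le (h : ∀ k g, IsSEChain P F k g → k ≤ n) : seSize P F ≤ n := by
  refine csSup_le ⟨0, _, isSEChain_zero⟩ ?_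
  rintro k ⟨g, hg⟩
  exact h k g hg

theorem exists_isNEChain_of_neSize_eq
    (hbdd : BddAbove {k | ∃ g : Fin k → ℤ × ℤ, IsNEChain P F k g}) (h : neSize P F = n) :
    ∃ g : Fin n → ℤ × ℤ, IsNEChain P F n g := by
  subst h
  exact Nat.sSup_mem (s := {k | ∃ g : Fin k → ℤ × ℤ, IsNEChain P F k g})
    ⟨0, _, isNEChain_zero⟩ hbdd

theorem exists_isSEChain_of_seSize_eq
    (hbdd : BddAbove {k | ∃ g : Fin k → ℤ × ℤ, IsSEChain P F k g}) (h : seSize P F = n) :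
    ∃ g : Fin n → ℤ × ℤ, IsSEChain P F n g := by
  subst h
  exact Nat.sSup_mem (s := {k | ∃ g : Fin k → ℤ × ℤ, IsSEChain P F k g})
    ⟨0, _, isSEChain_zero⟩ hbdd

theorem neSize_le_one (hF : ∀ c ∈ F, ∀ d ∈ F, c.1 < d.1 → d.2 ≤ c.2) :
    neSize P F ≤ 1 :=
  neSize_le fun k g hg => by
    by_contra! hk
    have h01 : (⟨0, by omega⟩ : Fin k) < ⟨1, hk⟩ := Fin.mk_lt_mk.2 zero_lt_one
    exact (hF _ (hg.1 _) _ (hg.1 _) (hg.2.1 h01)).not_gt (hg.2.2.1 h01)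

end Chains

section RowsAndColumns

variable {F : Set (ℤ × ℤ)}

theorem eq_of_rowLen_eq_one {x x' y : ℤ} (h : rowLen F y = 1) (hx : (x, y) ∈ F)
    (hx' : (x', y) ∈ F) : x = x' := by
  obtain ⟨z, hz⟩ := ncard_eq_one.1 h
  have hx : x ∈ Row F y := hx
  have hx' : x' ∈ Row F y := hx'
  rw [hz] at hx hx'
  exact hx.trans hx'.symm

theorem col_eq_singleton_of_colLen_eq_one {x y : ℤ} (h : colLen F x = 1) (hy : (x, y) ∈ F) :
    Col F x = {y} := by
  obtain ⟨z, hz⟩ := ncard_eq_one.1 h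
  have hy : y ∈ Col F x := hy
  rw [hz] at hy ⊢
  rw [hy]

end RowsAndColumns

section Fig7

variable {F : Set (ℤ × ℤ)} {g : Fin 3 → ℤ × ℤ}

theorem fst_mem_Icc_of_mem_MFig7 : ∀ c ∈ MFig7, c.1 ∈ Icc 1 3 := by
  rintro c (h | h) <;> constructor <;> omega

theorem IsNEChain.eq_of_MFig7 (hg : IsNEChain MFig7 F 3 g) : g = ![(1, 1), (2, 2), (3, 3)] := by
  obtain ⟨-, hx, hy, hgrid⟩ := hg
  have hx01 : (g 0).1 < (g 1).1 := hx (by decide)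
  have hx12 : (g 1).1 < (g 2).1 := hx (by decide)
  have hy01 : (g 0).2 < (g 1).2 := hy (by decide)
  have hy12 : (g 1).2 < (g 2).2 := hy (by decide)
  have h0 := hgrid 0 0
  have h2 := hgrid 2 2
  simp only [MFig7, mem_ofPred_eq] at h0 h2
  ext i <;> fin_cases i <;> simp <;> omega

theorem IsSEChain.eq_of_MFig7 (hg : IsSEChain MFig7 F 3 g) : g = ![(1, 3), (2, 2), (3, 1)] := by
  obtain ⟨-, hx, hy, hgrid⟩ := hg
  have hx01 : (g 0).1 < (g 1).1 := hx (by decide)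
  have hx12 : (g 1).1 < (g 2).1 := hx (by decide)
  have hy01 : (g 1).2 < (g 0).2 := hy (by decide)
  have hy12 : (g 2).2 < (g 1).2 := hy (by decide)
  have h0 := hgrid 0 0
  have h2 := hgrid 2 2
  have h20 := hgrid 2 0
  simp only [MFig7, mem_ofPred_eq] at h0 h2 h20
  ext i <;> fin_cases i <;> simp <;> omega

end Fig7

def fillingNE1SE3 : Set (ℤ × ℤ) := {(1, 4), (1, 3), (2, 2), (3, 1)}

theorem fillingNE1SE3_subset : fillingNE1SE3 ⊆ MFig7 := by
  simp [fillingNE1SE3, MFig7, insert_subset_iff]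

theorem rowLen_fillingNE1SE3 (y : ℤ) (h1 : 1 ≤ y) (h4 : y ≤ 4) :
    rowLen fillingNE1SE3 y = 1 := by
  rw [rowLen, ncard_eq_one]
  interval_cases y
  · exact ⟨3, by ext; simp [Row, fillingNE1SE3]⟩
  · exact ⟨2, by ext; simp [Row, fillingNE1SE3]⟩
  · exact ⟨1, by ext; simp [Row, fillingNE1SE3]⟩
  · exact ⟨1, by ext; simp [Row, fillingNE1SE3]⟩

theorem colLen_fillingNE1SE3 :
    colLen fillingNE1SE3 1 = 2 ∧ colLen fillingNE1SE3 2 = 1 ∧ colLen fillingNE1SE3 3 = 1 := by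
  refine ⟨ncard_eq_two.2 ⟨3, 4, by norm_num, ?_⟩, ncard_eq_one.2 ⟨2, ?_⟩,
    ncard_eq_one.2 ⟨1, ?_⟩⟩ <;> ext <;> simp [Col, fillingNE1SE3, or_comm]

theorem neSize_fillingNE1SE3 : neSize MFig7 fillingNE1SE3 = 1 := by
  refine le_antisymm (neSize_le_one (by simp [fillingNE1SE3]))
    (le_neSize (bddAbove_neChainSizes_s18 fst_mem_Icc_of_mem_MFig7) (g := ![(1, 4)])
      ⟨by simp [fillingNE1SE3], Subsingleton.strictMono _, Subsingleton.strictMono _,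
        by simp [MFig7]⟩)

theorem seSize_fillingNE1SE3 : seSize MFig7 fillingNE1SE3 = 3 := by
  refine le_antisymm (seSize_le fun _ _ hg => hg.length_le fst_mem_Icc_of_mem_MFig7)
    (le_seSize (bddAbove_seChainSizes fst_mem_Icc_of_mem_MFig7) (g := ![(1, 3), (2, 2), (3, 1)])
      ⟨?_, Fin.strictMono_iff_lt_succ.2 (by decide), Fin.strictAnti_iff_succ_lt.2 (by decide), ?_⟩)
  · simp [Fin.forall_fin_succ, fillingNE1SE3]
  · simp [Fin.forall_fin_succ, MFig7]

section Fillings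

variable {F : Set (ℤ × ℤ)}

theorem eq_fillingNE1SE3_of_seSize_eq_three (hsub : F ⊆ MFig7)
    (hrow : ∀ y, 1 ≤ y → y ≤ 4 → rowLen F y = 1) (hc1 : colLen F 1 = 2)
    (hc2 : colLen F 2 = 1) (hc3 : colLen F 3 = 1) (hse : seSize MFig7 F = 3) :
    F = fillingNE1SE3 := by
  obtain ⟨g, hg⟩ := exists_isSEChain_of_seSize_eq
    (bddAbove_seChainSizes fst_mem_Icc_of_mem_MFig7) hse
  have hmem := hg.1
  rw [hg.eq_of_MFig7] at hmem
  have h13 : ((1 : ℤ), (3 : ℤ)) ∈ F := hmem 0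
  have h22 : ((2 : ℤ), (2 : ℤ)) ∈ F := hmem 1
  have h31 : ((3 : ℤ), (1 : ℤ)) ∈ F := hmem 2
  have hcol1 : Col F 1 = {3, 4} := by
    refine eq_of_subset_of_ncard_le (fun t ht => ?_) ?_ (toFinite _)
    · have htF : ((1 : ℤ), t) ∈ F := ht
      have ht1 : t ≠ 1 := by
        rintro rfl
        exact absurd (eq_of_rowLen_eq_one (hrow 1 le_rfl (by norm_num)) htF h31) (by norm_num)
      have ht2 : t ≠ 2 := by
        rintro rfl
        exact absurd (eq_of_rowLen_eq_one (hrow 2 (by norm_num) (by norm_num)) htF h22)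
          (by norm_num)
      have := hsub htF
      simp only [MFig7, mem_ofPred_eq] at this
      simp only [mem_insert_iff, mem_singleton_iff]
      omega
    · rw [ncard_pair (by norm_num)]; exact hc1.ge
  have hcol2 := col_eq_singleton_of_colLen_eq_one hc2 h22
  have hcol3 := col_eq_singleton_of_colLen_eq_one hc3 h31
  refine Subset.antisymm (fun ⟨x, y⟩ h => ?_) ?_
  · have hy : y ∈ Col F x := h
    obtain ⟨hx1, hx3⟩ := fst_mem_Icc_of_mem_MFig7 _ (hsub h)
    interval_cases x <;> simp_all [fillingNE1SE3, or_comm]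
  · have h14 : ((1 : ℤ), (4 : ℤ)) ∈ F := show (4 : ℤ) ∈ Col F 1 by simp [hcol1]
    simp [fillingNE1SE3, insert_subset_iff, *]

theorem two_le_seSize_of_neSize_eq_three (hsub : F ⊆ MFig7) (hrow2 : rowLen F 2 = 1)
    (hc1 : colLen F 1 = 2) (hne : neSize MFig7 F = 3) : 2 ≤ seSize MFig7 F := by
  obtain ⟨g, hg⟩ := exists_isNEChain_of_neSize_eq
    (bddAbove_neChainSizes_s18 fst_mem_Icc_of_mem_MFig7) hne
  have hmem := hg.1
  rw [hg.eq_of_MFig7] at hmem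
  have h22 : ((2 : ℤ), (2 : ℤ)) ∈ F := hmem 1
  obtain ⟨t, ht, ht1⟩ := exists_ne_of_one_lt_ncard (hc1 ▸ one_lt_two) (1 : ℤ)
  have htF : ((1 : ℤ), t) ∈ F := ht
  have ht2 : t ≠ 2 := by
    rintro rfl
    exact absurd (eq_of_rowLen_eq_one hrow2 htF h22) (by norm_num)
  have htM := hsub htF
  simp only [MFig7, mem_ofPred_eq] at htM
  have ht_gt : 2 < t := by omega
  have ht_mem : 1 ≤ t ∧ t ≤ 4 := by omega
  refine le_seSize (bddAbove_seChainSizes fst_mem_Icc_of_mem_MFig7) (g := ![(1, t), (2, 2)])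
    ⟨?_, Fin.strictMono_iff_lt_succ.2 (by simp), Fin.strictAnti_iff_succ_lt.2 (by simpa), ?_⟩
  · simp [Fin.forall_fin_succ, htF, h22]
  · simp [Fin.forall_fin_succ, MFig7, ht_mem]

end Fillings

/-- For the moon polyomino of Figure 7 with row sums `(1,1,1,1)` and column sums
`(2,1,1)`, the joint distribution of `(ne, se)` is not symmetric: exactly one filling has
`(ne, se) = (1, 3)` but no filling has `(ne, se) = (3, 1)`. -/
theorem fig7_not_symmetric :
    {F : Set (ℤ × ℤ) | F ⊆ MFig7 ∧ (∀ y, 1 ≤ y → y ≤ 4 → rowLen F y = 1) ∧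
      colLen F 1 = 2 ∧ colLen F 2 = 1 ∧ colLen F 3 = 1 ∧
      neSize MFig7 F = 1 ∧ seSize MFig7 F = 3}.ncard = 1 ∧
    {F : Set (ℤ × ℤ) | F ⊆ MFig7 ∧ (∀ y, 1 ≤ y → y ≤ 4 → rowLen F y = 1) ∧
      colLen F 1 = 2 ∧ colLen F 2 = 1 ∧ colLen F 3 = 1 ∧
      neSize MFig7 F = 3 ∧ seSize MFig7 F = 1}.ncard = 0 := by
  constructor
  · refine ncard_eq_one.2 ⟨fillingNE1SE3, eq_singleton_iff_unique_mem.2 ⟨?_, ?_⟩⟩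
    · obtain ⟨hc1, hc2, hc3⟩ := colLen_fillingNE1SE3
      exact ⟨fillingNE1SE3_subset, rowLen_fillingNE1SE3, hc1, hc2, hc3,
        neSize_fillingNE1SE3, seSize_fillingNE1SE3⟩
    · rintro F ⟨hsub, hrow, hc1, hc2, hc3, -, hse⟩
      exact eq_fillingNE1SE3_of_seSize_eq_three hsub hrow hc1 hc2 hc3 hse
  · refine (congrArg ncard (eq_empty_of_forall_notMem ?_)).trans (ncard_empty _)
    rintro F ⟨hsub, hrow, hc1, -, -, hne, hse⟩
    have := two_le_seSize_of_neSize_eq_three hsub (hrow 2 (by norm_num) (by norm_num)) hc1 hne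
    omega
end
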